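/- arXiv:1506.02445 — 12 statements merged into one kernel-verified Lean document; each statement's English description precedes it below -/
import Mathlib

section
/- Any (K_4, K_4[n])-saturated graph G with n ≥ 2 has minimum degree at least 4. -/
open SimpleGraph

/-- The blow-up `H[n]` of a graph `H` onto parts of size `n`: each vertex of `H` is
replaced by an independent set of size `n`, each edge by a complete bipartite graph. -/
def blowup {V : Type*} (H : SimpleGraph V) (n : ℕ) : SimpleGraph (V × Fin n) :=
  SimpleGraph.comap Prod.fst H

/-- `f` selects one vertex in each part of the blow-up, forming a partite copy of `H` in `G`. -/
def IsPartiteCopy {V : Type*} {n : ℕ} (H : SimpleGraph V) (G : SimpleGraph (V × Fin n))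
    (f : V → Fin n) : Prop :=
  ∀ ⦃u v : V⦄, H.Adj u v → G.Adj (u, f u) (v, f v)

/-- `G ⊆ H[n]` is `(H,H[n])`-partite-saturated: it has no partite copy of `H`, but adding
any edge of `H[n]` not in `G` creates a partite copy of `H`. -/
def PartiteSaturated {V : Type*} {n : ℕ} (H : SimpleGraph V)
    (G : SimpleGraph (V × Fin n)) : Prop :=
  G ≤ blowup H n ∧ (¬ ∃ f, IsPartiteCopy H G f) ∧
    ∀ ⦃x y : V × Fin n⦄, (blowup H n).Adj x y → ¬ G.Adj x y →
      ∃ f, IsPartiteCopy H (G ⊔ SimpleGraph.fromEdgeSet {s(x, y)}) f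

/-- The degree of a vertex. -/
noncomputable def deg {α : Type*} (G : SimpleGraph α) (v : α) : ℕ := (G.neighborSet v).ncard

/-- `G ⊆ K_r[n]` is `(K_r,K_r[n])`-saturated: `G` is `K_r`-free but adding any edge of
`K_r[n]` not in `G` creates a copy of `K_r`. -/
def CliqueSaturated (r n : ℕ) (G : SimpleGraph (Fin r × Fin n)) : Prop :=
  G ≤ blowup (⊤ : SimpleGraph (Fin r)) n ∧ G.CliqueFree r ∧
    ∀ ⦃x y : Fin r × Fin n⦄, (blowup (⊤ : SimpleGraph (Fin r)) n).Adj x y → ¬ G.Adj x y →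
      ¬ (G ⊔ SimpleGraph.fromEdgeSet {s(x, y)}).CliqueFree r

lemma exists_edge {n : ℕ} {G : SimpleGraph (Fin 4 × Fin n)} (hG : CliqueSaturated 4 n G)
    {i j k l : Fin 4} (hij : i ≠ j) (hik : i ≠ k) (hil : i ≠ l) (hjk : j ≠ k)
    (hjl : j ≠ l) (hkl : k ≠ l) {p u : Fin n} (hu : ¬ G.Adj (i,p) (j,u)) :
    ∃ b c, G.Adj (i,p) (k,b) ∧ G.Adj (i,p) (l,c) ∧ G.Adj (k,b) (l,c) := by
  obtain ⟨hle, hfree, hsat⟩ := hG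
  set x : Fin 4 × Fin n := (i,p) with hx
  set y : Fin 4 × Fin n := (j,u) with hy
  have hb : (blowup (⊤:SimpleGraph (Fin 4)) n).Adj x y := by simp [blowup, hx, hy]; exact hij
  have hns := hsat hb hu
  rw [CliqueFree] at hns; push_neg at hns
  obtain ⟨t, ht⟩ := hns
  set G' := G ⊔ SimpleGraph.fromEdgeSet {s(x,y)} with hG'
  have hxy : x ≠ y := by simp [hx, hy, Prod.ext_iff]; intro h; exact absurd h hij
  have hle' : G' ≤ blowup (⊤:SimpleGraph (Fin 4)) n := by
    apply sup_le hle
    intro a b hab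
    rw [SimpleGraph.fromEdgeSet_adj] at hab
    obtain ⟨hm, hne⟩ := hab
    rw [Set.mem_singleton_iff, Sym2.eq_iff] at hm
    rcases hm with ⟨rfl, rfl⟩ | ⟨rfl, rfl⟩ <;> simp [blowup, hx, hy]
    · exact hij
    · exact hij.symm
  have hadj : ∀ a ∈ t, ∀ b ∈ t, a ≠ b → G'.Adj a b := fun a ha b hb hab => ht.1 (Finset.mem_coe.mpr ha) (Finset.mem_coe.mpr hb) hab
  -- key: a G'-edge not equal to the new edge is in G
  have key : ∀ a b : Fin 4 × Fin n, G'.Adj a b → ¬(a = x ∧ b = y) → ¬(a = y ∧ b = x) →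
      G.Adj a b := by
    intro a b hab h1 h2
    rcases hab with h | h
    · exact h
    · rw [SimpleGraph.fromEdgeSet_adj, Set.mem_singleton_iff, Sym2.eq_iff] at h
      rcases h.1 with h | h
      · exact absurd h h1
      · exact absurd h h2
  -- firsts injective on t
  have hinj : Set.InjOn Prod.fst (t : Set (Fin 4 × Fin n)) := by
    intro a ha b hb h
    by_contra hne
    exact absurd h (hle' (hadj a (Finset.mem_coe.mp ha) b (Finset.mem_coe.mp hb) hne))
  have himg : t.image Prod.fst = Finset.univ := by
    apply Finset.eq_univ_of_card
    rw [Finset.card_image_of_injOn hinj, ht.2]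
    rfl
  have hvert : ∀ a : Fin 4, ∃ w ∈ t, w.1 = a := by
    intro a
    have : a ∈ t.image Prod.fst := himg ▸ Finset.mem_univ a
    simpa using this
  -- x and y both lie in t
  have hxyt : x ∈ t ∧ y ∈ t := by
    by_contra hcon
    apply hfree t
    refine ⟨?_, ht.2⟩
    intro a ha b hb hab
    refine key a b (hadj a ha b hb hab) ?_ ?_
    · rintro ⟨rfl, rfl⟩; exact hcon ⟨ha, hb⟩
    · rintro ⟨rfl, rfl⟩; exact hcon ⟨hb, ha⟩
  obtain ⟨hxt, hyt⟩ := hxyt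
  obtain ⟨wk, hwkt, hwk1⟩ := hvert k
  obtain ⟨wl, hwlt, hwl1⟩ := hvert l
  have hwkx : wk ≠ x := fun h => hik (by rw [← hwk1, h, hx])
  have hwky : wk ≠ y := fun h => hjk (by rw [← hwk1, h, hy])
  have hwlx : wl ≠ x := fun h => hil (by rw [← hwl1, h, hx])
  have hwly : wl ≠ y := fun h => hjl (by rw [← hwl1, h, hy])
  have hwkl : wk ≠ wl := fun h => hkl (by rw [← hwk1, ← hwl1, h])
  have e1 : G.Adj x wk := by
    refine key x wk (hadj x hxt wk hwkt (Ne.symm hwkx)) ?_ ?_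
    · rintro ⟨-, rfl⟩; exact hwky rfl
    · rintro ⟨h, -⟩; exact hxy h
  have e2 : G.Adj x wl := by
    refine key x wl (hadj x hxt wl hwlt (Ne.symm hwlx)) ?_ ?_
    · rintro ⟨-, rfl⟩; exact hwly rfl
    · rintro ⟨h, -⟩; exact hxy h
  have e3 : G.Adj wk wl := by
    refine key wk wl (hadj wk hwkt wl hwlt hwkl) ?_ ?_
    · rintro ⟨rfl, -⟩; exact hwkx rfl
    · rintro ⟨rfl, -⟩; exact hwky rfl
  have hwk : wk = (k, wk.2) := by rw [← hwk1]
  have hwl : wl = (l, wl.2) := by rw [← hwl1]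
  exact ⟨wk.2, wl.2, by rw [← hwk]; exact e1, by rw [← hwl]; exact e2,
    by rw [← hwk, ← hwl]; exact e3⟩

lemma card4' {α : Type*} {s : Set α} {a b c d : α} (hfin : s.Finite) (ha : a ∈ s) (hb : b ∈ s)
    (hc : c ∈ s) (hd : d ∈ s) (hab : a ≠ b) (hac : a ≠ c) (had : a ≠ d) (hbc : b ≠ c)
    (hbd : b ≠ d) (hcd : c ≠ d) : 4 ≤ s.ncard := by
  have hsub : ({a,b,c,d} : Set α) ⊆ s := by
    intro x hx; rcases hx with rfl|rfl|rfl|rfl <;> assumption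
  have f1 : ({d} : Set α).Finite := Set.finite_singleton d
  have f2 := f1.insert c
  have f3 := f2.insert b
  have h4 : ({a,b,c,d} : Set α).ncard = 4 := by
    rw [Set.ncard_insert_of_notMem (by simp [hab,hac,had]) f3,
        Set.ncard_insert_of_notMem (by simp [hbc,hbd]) f2,
        Set.ncard_insert_of_notMem (by simp [hcd]) f1, Set.ncard_singleton]
  exact h4 ▸ Set.ncard_le_ncard hsub hfin

lemma deg4 {n : ℕ} {G : SimpleGraph (Fin 4 × Fin n)} {v a b c d : Fin 4 × Fin n}
    (ha : G.Adj v a) (hb : G.Adj v b) (hc : G.Adj v c) (hd : G.Adj v d)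
    (hab : a ≠ b) (hac : a ≠ c) (had : a ≠ d) (hbc : b ≠ c) (hbd : b ≠ d) (hcd : c ≠ d) :
    4 ≤ (G.neighborSet v).ncard :=
  card4' (Set.toFinite _) ha hb hc hd hab hac had hbc hbd hcd

lemma min_deg {n : ℕ} (hn : 2 ≤ n) {G : SimpleGraph (Fin 4 × Fin n)}
    (hG : CliqueSaturated 4 n G) (i j k l : Fin 4) (hij : i ≠ j) (hik : i ≠ k) (hil : i ≠ l)
    (hjk : j ≠ k) (hjl : j ≠ l) (hkl : k ≠ l) (p : Fin n) :
    4 ≤ (G.neighborSet (i,p)).ncard := by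
  have h0 : (0:ℕ) < n := by omega
  have h1 : (1:ℕ) < n := by omega
  set z0 : Fin n := ⟨0, h0⟩
  set z1 : Fin n := ⟨1, h1⟩
  have hz : z0 ≠ z1 := by simp [z0, z1, Fin.ext_iff]
  by_cases hj : ∀ u, G.Adj (i,p) (j,u)
  · by_cases hk : ∀ u, G.Adj (i,p) (k,u)
    · exact deg4 (hj z0) (hj z1) (hk z0) (hk z1) (by simp [hz]) (by simp [hjk])
        (by simp [hjk]) (by simp [hjk]) (by simp [hjk]) (by simp [hz])
    · by_cases hl : ∀ u, G.Adj (i,p) (l,u)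
      · exact deg4 (hj z0) (hj z1) (hl z0) (hl z1) (by simp [hz]) (by simp [hjl])
          (by simp [hjl]) (by simp [hjl]) (by simp [hjl]) (by simp [hz])
      · push_neg at hk hl
        obtain ⟨uk, huk⟩ := hk
        obtain ⟨ul, hul⟩ := hl
        obtain ⟨b2, c2, h2j, h2l, -⟩ := exists_edge hG hik hij hil hjk.symm hkl hjl huk
        obtain ⟨b3, c3, h3j, h3k, -⟩ := exists_edge hG hil hij hik hjl.symm hkl.symm hjk hul
        exact deg4 (hj z0) (hj z1) h2l h3k (by simp [hz]) (by simp [hjl]) (by simp [hjk])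
          (by simp [hjl]) (by simp [hjk]) (by simp [hkl.symm])
  · by_cases hk : ∀ u, G.Adj (i,p) (k,u)
    · by_cases hl : ∀ u, G.Adj (i,p) (l,u)
      · exact deg4 (hk z0) (hk z1) (hl z0) (hl z1) (by simp [hz]) (by simp [hkl])
          (by simp [hkl]) (by simp [hkl]) (by simp [hkl]) (by simp [hz])
      · push_neg at hj hl
        obtain ⟨uj, huj⟩ := hj
        obtain ⟨ul, hul⟩ := hl
        obtain ⟨b1, c1, h1k, h1l, -⟩ := exists_edge hG hij hik hil hjk hjl hkl huj
        obtain ⟨b3, c3, h3j, h3k, -⟩ := exists_edge hG hil hij hik hjl.symm hkl.symm hjk hul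
        exact deg4 (hk z0) (hk z1) h1l h3j (by simp [hz]) (by simp [hkl]) (by simp [hjk.symm])
          (by simp [hkl]) (by simp [hjk.symm]) (by simp [hjl.symm])
    · by_cases hl : ∀ u, G.Adj (i,p) (l,u)
      · push_neg at hj hk
        obtain ⟨uj, huj⟩ := hj
        obtain ⟨uk, huk⟩ := hk
        obtain ⟨b1, c1, h1k, h1l, -⟩ := exists_edge hG hij hik hil hjk hjl hkl huj
        obtain ⟨b2, c2, h2j, h2l, -⟩ := exists_edge hG hik hij hil hjk.symm hkl hjl huk
        exact deg4 (hl z0) (hl z1) h1k h2j (by simp [hz]) (by simp [hkl.symm])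
          (by simp [hjl.symm]) (by simp [hkl.symm]) (by simp [hjl.symm]) (by simp [hjk.symm])
      · push_neg at hj hk hl
        obtain ⟨uj, huj⟩ := hj
        obtain ⟨uk, huk⟩ := hk
        obtain ⟨ul, hul⟩ := hl
        obtain ⟨b1, c1, h1k, h1l, h1kl⟩ := exists_edge hG hij hik hil hjk hjl hkl huj
        obtain ⟨a2, c2, h2j, h2l, h2jl⟩ := exists_edge hG hik hij hil hjk.symm hkl hjl huk
        obtain ⟨a3, b3, h3j, h3k, h3jk⟩ := exists_edge hG hil hij hik hjl.symm hkl.symm hjk hul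
        by_cases ha : a2 = a3
        · by_cases hbb : b1 = b3
          · by_cases hcc : c1 = c2
            · -- K4 in G: contradiction
              exfalso
              subst ha hbb hcc
              apply hG.2.1 {(i,p), (j,a2), (k,b1), (l,c1)}
              constructor
              · have s1 := h2j.symm
                have s2 := h1k.symm
                have s3 := h1l.symm
                have s4 := h3jk.symm
                have s5 := h2jl.symm
                have s6 := h1kl.symm
                intro x hx y hy hne
                simp only [Finset.coe_insert, Set.mem_insert_iff, Finset.coe_singleton,
                  Set.mem_singleton_iff] at hx hy
                rcases hx with rfl|rfl|rfl|rfl <;> rcases hy with rfl|rfl|rfl|rfl <;>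
                  first
                    | exact absurd rfl hne
                    | assumption
              · rw [Finset.card_insert_of_notMem (by simp [hij, hik, hil]),
                    Finset.card_insert_of_notMem (by simp [hjk, hjl]),
                    Finset.card_insert_of_notMem (by simp [hkl]),
                    Finset.card_singleton]
            · exact deg4 h1l h2l h2j h1k (by simp [hcc]) (by simp [hjl.symm])
                (by simp [hkl.symm]) (by simp [hjl.symm]) (by simp [hkl.symm]) (by simp [hjk])
          · exact deg4 h1k h3k h2j h1l (by simp [hbb]) (by simp [hjk.symm])
              (by simp [hkl]) (by simp [hjk.symm]) (by simp [hkl]) (by simp [hjl])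
        · exact deg4 h2j h3j h1k h1l (by simp [ha]) (by simp [hjk]) (by simp [hjl])
            (by simp [hjk]) (by simp [hjl]) (by simp [hkl])


/-- Any `(K_4,K_4[n])`-saturated graph with `n ≥ 2` has minimum degree at least `4`. -/
theorem stmt_0 (n : ℕ) (hn : 2 ≤ n) (G : SimpleGraph (Fin 4 × Fin n))
    (hG : CliqueSaturated 4 n G) : ∀ v : Fin 4 × Fin n, 4 ≤ deg G v := by
  rintro ⟨i, p⟩
  show 4 ≤ (G.neighborSet (i,p)).ncard
  fin_cases i
  · exact min_deg hn hG 0 1 2 3 (by decide) (by decide) (by decide) (by decide) (by decide) (by decide) p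
  · exact min_deg hn hG 1 0 2 3 (by decide) (by decide) (by decide) (by decide) (by decide) (by decide) p
  · exact min_deg hn hG 2 0 1 3 (by decide) (by decide) (by decide) (by decide) (by decide) (by decide) p
  · exact min_deg hn hG 3 0 1 2 (by decide) (by decide) (by decide) (by decide) (by decide) (by decide) p
end

section
/- Let G be a (K_4, K_4[n])-saturated graph on parts X_1 ∪ X_2 ∪ X_3 ∪ X_4 with n ≥ 3, and let v be a vertex of degree exactly 4. Then v has exactly one neighbour in each of two parts and exactly two neighbours in one part; the neighbourhood of v induces a path whose endpoints are the two vertices lying in the same part; and every neighbour of v has degree at least n − 2. -/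
/-!
Adding a missing edge `uv` of the blow-up creates a `K₄`, so `u` and `v` have two adjacent common
neighbours, one in each of the two parts other than those of `u` and `v`. If `v` had no neighbour
in some part `i ≠ v.1`, this would make every vertex of the two remaining parts a neighbour of `v`,
and `2n > 4`. Hence the four neighbours of `v` are `a, d` in one part and `b, c` in the other two.
A non-neighbour `u` in the part of `a, d` is then joined to `b` and `c`, and `b ~ c`; a
non-neighbour in the part of `c` (of `b`) is joined to `b` (to `c`) and both are joined to one of
`a, d`. `K₄`-freeness forces these two vertices of `{a, d}` to differ, which gives the path
`a - b - c - d` and the degree bounds.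
-/

open SimpleGraph

namespace SimpleGraph

variable {α : Type*} {G : SimpleGraph α}

lemma CliqueFree.exists_adj_adj_of_not_cliqueFree_sup_edge (h : G.CliqueFree 4) {x y : α}
    (hxy : ¬(G ⊔ edge x y).CliqueFree 4) :
    ∃ a b, G.Adj a b ∧ G.Adj x a ∧ G.Adj x b ∧ G.Adj y a ∧ G.Adj y b := by
  classical
  obtain ⟨t, ht⟩ := not_forall_not.1 hxy
  have hne : x ≠ y := by
    rintro rfl
    rw [edge_self_eq_bot, sup_bot_eq] at ht
    exact h t ht
  have hx := h.mem_of_sup_edge_isNClique ht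
  have hy := h.mem_of_sup_edge_isNClique (edge_comm x y ▸ ht)
  have hcx : G.IsClique (↑t \ {x}) := ht.1.sdiff_of_sup_edge
  have hcy : G.IsClique (↑t \ {y}) := (edge_comm x y ▸ ht).1.sdiff_of_sup_edge
  have hcard : ((t.erase x).erase y).card = 2 := by
    rw [Finset.card_erase_of_mem (Finset.mem_erase.2 ⟨hne.symm, hy⟩),
      Finset.card_erase_of_mem hx, ht.card_eq]
  obtain ⟨a, b, hab, hs⟩ := Finset.card_eq_two.1 hcard
  have ha : a ≠ y ∧ a ≠ x ∧ a ∈ t := by simpa using hs.ge (Finset.mem_insert_self a {b})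
  have hb : b ≠ y ∧ b ≠ x ∧ b ∈ t := by simpa using hs.ge (by simp)
  exact ⟨a, b, hcx ⟨ha.2.2, ha.2.1⟩ ⟨hb.2.2, hb.2.1⟩ hab,
    hcy ⟨hx, hne⟩ ⟨ha.2.2, ha.1⟩ ha.2.1.symm, hcy ⟨hx, hne⟩ ⟨hb.2.2, hb.1⟩ hb.2.1.symm,
    hcx ⟨hy, hne.symm⟩ ⟨ha.2.2, ha.2.1⟩ ha.1.symm, hcx ⟨hy, hne.symm⟩ ⟨hb.2.2, hb.2.1⟩ hb.1.symm⟩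

lemma adj_iff_of_neighborSet_eq {v a b c d w : α} (h : G.neighborSet v = {a, b, c, d}) :
    G.Adj v w ↔ w = a ∨ w = b ∨ w = c ∨ w = d := by
  rw [← mem_neighborSet, h]; simp

lemma CliqueFree.not_adj_of_four (h : G.CliqueFree 4) {w x y z : α} (hwx : G.Adj w x)
    (hwy : G.Adj w y) (hwz : G.Adj w z) (hxy : G.Adj x y) (hxz : G.Adj x z) : ¬G.Adj y z := by
  classical
  intro hyz
  refine h {w, x, y, z} ((is3Clique_triple_iff.2 ⟨hxy, hxz, hyz⟩).insert ?_)
  simp [hwx, hwy, hwz]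

end SimpleGraph

lemma Fin.eq_or_eq_of_four_ne {a b c d i : Fin 4} (hab : a ≠ b) (hac : a ≠ c) (had : a ≠ d)
    (hbc : b ≠ c) (hbd : b ≠ d) (hcd : c ≠ d) (hic : i ≠ c) (hid : i ≠ d) : i = a ∨ i = b := by
  revert a b c d i; decide

lemma Fin.exists_four_ne {p j : Fin 4} (h : p ≠ j) :
    ∃ k l, p ≠ k ∧ p ≠ l ∧ j ≠ k ∧ j ≠ l ∧ k ≠ l := by
  revert p j; decide

lemma Fin.exists_notMem {n : ℕ} {s : Finset (Fin n)} (h : s.card < n) : ∃ t, t ∉ s := by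
  simpa [Finset.eq_univ_iff_forall] using (Finset.card_lt_iff_ne_univ s).1 (by simpa using h)

lemma le_deg_of_forall_adj {V : Type*} [Finite V] {n : ℕ} {G : SimpleGraph (V × Fin n)}
    {w : V × Fin n} {i : V} {s : Finset (Fin n)} (h : ∀ t ∉ s, G.Adj w (i, t)) :
    n - s.card ≤ deg G w :=
  calc n - s.card = (sᶜ : Finset (Fin n)).card := by rw [Finset.card_compl, Fintype.card_fin]
    _ = (Prod.mk i '' ↑sᶜ).ncard := by
      rw [Set.ncard_image_of_injective _ (Prod.mk_right_injective i), Set.ncard_coe_finset]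
    _ ≤ deg G w := Set.ncard_le_ncard (by rintro _ ⟨t, ht, rfl⟩; exact h t (by simpa using ht))

namespace CliqueSaturated

lemma fst_ne_of_adj {r n : ℕ} {G : SimpleGraph (Fin r × Fin n)} (hG : CliqueSaturated r n G)
    {u v : Fin r × Fin n} (h : G.Adj u v) : u.1 ≠ v.1 := by
  simpa [blowup] using hG.1 h

variable {n : ℕ} {G : SimpleGraph (Fin 4 × Fin n)} {v a b c d : Fin 4 × Fin n}

lemma exists_adj_adj_of_not_adj (hG : CliqueSaturated 4 n G) {u : Fin 4 × Fin n}
    (hvu : v.1 ≠ u.1) (h : ¬G.Adj v u) :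
    ∃ x y, G.Adj x y ∧ G.Adj v x ∧ G.Adj v y ∧ G.Adj u x ∧ G.Adj u y :=
  hG.2.1.exists_adj_adj_of_not_cliqueFree_sup_edge (hG.2.2 (by simpa [blowup] using hvu) h)

lemma exists_adj_adj_fst_eq_of_not_adj (hG : CliqueSaturated 4 n G) {u : Fin 4 × Fin n}
    (hvu : v.1 ≠ u.1) (h : ¬G.Adj v u) {i : Fin 4} (hiv : i ≠ v.1) (hiu : i ≠ u.1) :
    ∃ x y, x.1 = i ∧ G.Adj x y ∧ G.Adj v x ∧ G.Adj v y ∧ G.Adj u x ∧ G.Adj u y := by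
  obtain ⟨x, y, hxy, hvx, hvy, hux, huy⟩ := hG.exists_adj_adj_of_not_adj hvu h
  rcases Fin.eq_or_eq_of_four_ne (hG.fst_ne_of_adj hxy) (hG.fst_ne_of_adj hvx).symm
    (hG.fst_ne_of_adj hux).symm (hG.fst_ne_of_adj hvy).symm (hG.fst_ne_of_adj huy).symm hvu
    hiv hiu with rfl | rfl
  · exact ⟨x, y, rfl, hxy, hvx, hvy, hux, huy⟩
  · exact ⟨y, x, rfl, hxy.symm, hvy, hvx, huy, hux⟩

lemma exists_adj_fst_eq (hG : CliqueSaturated 4 n G) (hv : deg G v < 2 * n)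
    {i : Fin 4} (hi : i ≠ v.1) : ∃ w, G.Adj v w ∧ w.1 = i := by
  by_contra! hno
  have hsub : ↑((Finset.univ.erase v.1).erase i ×ˢ (Finset.univ : Finset (Fin n))) ⊆
      G.neighborSet v := by
    intro u hu
    simp only [Finset.coe_product, Finset.coe_erase, Finset.coe_univ, Set.mem_prod,
      Set.mem_sdiff, Set.mem_singleton_iff] at hu
    by_contra hvu
    obtain ⟨x, -, rfl, -, hvx, -⟩ :=
      hG.exists_adj_adj_fst_eq_of_not_adj (Ne.symm hu.1.1.2) hvu hi (Ne.symm hu.1.2)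
    exact hno x hvx rfl
  have := Set.ncard_le_ncard hsub
  rw [Set.ncard_coe_finset, Finset.card_product, Finset.card_erase_of_mem (by simpa using hi),
    Finset.card_erase_of_mem (Finset.mem_univ _)] at this
  simp only [Finset.card_univ, Fintype.card_fin] at this
  exact absurd (this.trans_lt hv) (by omega)

lemma exists_neighborSet_eq (hG : CliqueSaturated 4 n G) (hn : 3 ≤ n) (hv : deg G v = 4) :
    ∃ a b c d, G.neighborSet v = {a, b, c, d} ∧ a.1 = d.1 ∧ a ≠ d ∧ a.1 ≠ b.1 ∧ a.1 ≠ c.1 ∧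
      b.1 ≠ c.1 := by
  have hlt : (↑(Finset.univ.erase v.1) : Set (Fin 4)).ncard < (G.neighborSet v).ncard := by
    rw [Set.ncard_coe_finset, Finset.card_erase_of_mem (Finset.mem_univ _), Finset.card_univ,
      Fintype.card_fin]
    change 4 - 1 < deg G v
    omega
  obtain ⟨a, ha, d, hd, had, hadfst⟩ := Set.exists_ne_map_eq_of_ncard_lt_of_maps_to hlt
    (f := Prod.fst) (fun w hw => by simpa using (hG.fst_ne_of_adj hw).symm)
  have hv2 : deg G v < 2 * n := by omega
  obtain ⟨k, l, hk, hl, hak, hal, hkl⟩ := Fin.exists_four_ne (hG.fst_ne_of_adj ha)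
  obtain ⟨b, hb, rfl⟩ := hG.exists_adj_fst_eq hv2 (Ne.symm hk)
  obtain ⟨c, hc, rfl⟩ := hG.exists_adj_fst_eq hv2 (Ne.symm hl)
  refine ⟨a, b, c, d, (Set.eq_of_subset_of_ncard_le ?_ ?_).symm, hadfst, had, hak, hal, hkl⟩
  · rintro w (rfl | rfl | rfl | rfl) <;> assumption
  · refine (hv.trans (Set.ncard_eq_four.2 ⟨a, b, c, d, ne_of_apply_ne Prod.fst hak,
      ne_of_apply_ne Prod.fst hal, had, ne_of_apply_ne Prod.fst hkl, ?_, ?_, rfl⟩).symm).le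
    · exact ne_of_apply_ne Prod.fst (hadfst ▸ hak.symm)
    · exact ne_of_apply_ne Prod.fst (hadfst ▸ hal.symm)

lemma adj_of_mem_doubled_part (hG : CliqueSaturated 4 n G) (hN : G.neighborSet v = {a, b, c, d})
    (had : a.1 = d.1) (hab : a.1 ≠ b.1) (hac : a.1 ≠ c.1) (hbc : b.1 ≠ c.1) {u : Fin 4 × Fin n}
    (hu : u.1 = a.1) (hua : u ≠ a) (hud : u ≠ d) : G.Adj b c ∧ G.Adj u b ∧ G.Adj u c := by
  have hnbr (w) : G.Adj v w ↔ w = a ∨ w = b ∨ w = c ∨ w = d := adj_iff_of_neighborSet_eq hN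
  have hvu : v.1 ≠ u.1 := hu ▸ hG.fst_ne_of_adj ((hnbr a).2 (by simp))
  have hvb : v.1 ≠ b.1 := hG.fst_ne_of_adj ((hnbr b).2 (by simp))
  obtain ⟨x, y, hx, hxy, hvx, hvy, hux, huy⟩ := hG.exists_adj_adj_fst_eq_of_not_adj hvu
    (by grind) hvb.symm (hu ▸ hab.symm)
  have hxy₁ := hG.fst_ne_of_adj hxy
  have huy₁ := hG.fst_ne_of_adj huy
  obtain rfl : x = b := by grind
  obtain rfl : y = c := by grind
  exact ⟨hxy, hux, huy⟩

lemma exists_adj_of_mem_single_part (hG : CliqueSaturated 4 n G)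
    (hN : G.neighborSet v = {a, b, c, d}) (had : a.1 = d.1) (hab : a.1 ≠ b.1) (hac : a.1 ≠ c.1)
    (hbc : b.1 ≠ c.1) {u : Fin 4 × Fin n} (hu : u.1 = b.1) (hub : u ≠ b) :
    ∃ y, (y = a ∨ y = d) ∧ G.Adj c y ∧ G.Adj u c ∧ G.Adj u y := by
  have hnbr (w) : G.Adj v w ↔ w = a ∨ w = b ∨ w = c ∨ w = d := adj_iff_of_neighborSet_eq hN
  have hvu : v.1 ≠ u.1 := hu ▸ hG.fst_ne_of_adj ((hnbr b).2 (by simp))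
  have hvc : v.1 ≠ c.1 := hG.fst_ne_of_adj ((hnbr c).2 (by simp))
  obtain ⟨x, y, hx, hxy, hvx, hvy, hux, huy⟩ := hG.exists_adj_adj_fst_eq_of_not_adj hvu
    (by grind) hvc.symm (hu ▸ hbc.symm)
  have hxy₁ := hG.fst_ne_of_adj hxy
  have huy₁ := hG.fst_ne_of_adj huy
  obtain rfl : x = c := by grind
  exact ⟨y, by grind, hxy, hux, huy⟩

lemma exists_neighborSet_eq_and_adj (hG : CliqueSaturated 4 n G) (hn : 3 ≤ n) (hv : deg G v = 4) :
    ∃ a b c d, G.neighborSet v = {a, b, c, d} ∧ a.1 = d.1 ∧ a ≠ d ∧ a.1 ≠ b.1 ∧ a.1 ≠ c.1 ∧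
      b.1 ≠ c.1 ∧ G.Adj a b := by
  obtain ⟨a, b, c, d, hN, had, hne, hab, hac, hbc⟩ := hG.exists_neighborSet_eq hn hv
  obtain ⟨t, ht⟩ := Fin.exists_notMem (s := {c.2}) (by simp; omega)
  have hN' : G.neighborSet v = {a, c, b, d} := by rw [hN, Set.insert_comm b c]
  obtain ⟨y, rfl | rfl, hby, -⟩ := hG.exists_adj_of_mem_single_part hN' had hac hab hbc.symm
    (u := (c.1, t)) rfl (fun h => ht (Finset.mem_singleton.2 (congrArg Prod.snd h)))
  · exact ⟨y, b, c, d, hN, had, hne, hab, hac, hbc, hby.symm⟩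
  · refine ⟨y, b, c, a, ?_, had.symm, hne.symm, had ▸ hab, had ▸ hac, hbc, hby.symm⟩
    rw [hN]; ext; simp only [Set.mem_insert_iff, Set.mem_singleton_iff]; tauto

lemma neighborSet_path_of_adj (hG : CliqueSaturated 4 n G) (hn : 3 ≤ n)
    (hN : G.neighborSet v = {a, b, c, d}) (had : a.1 = d.1) (hab : a.1 ≠ b.1) (hac : a.1 ≠ c.1)
    (hbc : b.1 ≠ c.1) (hab' : G.Adj a b) :
    G.Adj b c ∧ G.Adj c d ∧ ¬G.Adj a c ∧ ¬G.Adj b d ∧ ¬G.Adj a d := by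
  obtain ⟨t, ht⟩ := Fin.exists_notMem (s := {a.2, d.2}) (Finset.card_le_two.trans_lt (by omega))
  simp only [Finset.mem_insert, Finset.mem_singleton, not_or] at ht
  obtain ⟨t', ht'⟩ := Fin.exists_notMem (s := {b.2}) (by simp; omega)
  have hbc' := (hG.adj_of_mem_doubled_part hN had hab hac hbc (u := (a.1, t)) rfl
    (fun h => ht.1 (congrArg Prod.snd h)) (fun h => ht.2 (congrArg Prod.snd h))).1
  obtain ⟨y, hy, hcy, -⟩ := hG.exists_adj_of_mem_single_part hN had hab hac hbc (u := (b.1, t'))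
    rfl (fun h => ht' (Finset.mem_singleton.2 (congrArg Prod.snd h)))
  have hva : G.Adj v a := (adj_iff_of_neighborSet_eq hN).2 (by simp)
  have hvb : G.Adj v b := (adj_iff_of_neighborSet_eq hN).2 (by simp)
  have hvc : G.Adj v c := (adj_iff_of_neighborSet_eq hN).2 (by simp)
  have hvd : G.Adj v d := (adj_iff_of_neighborSet_eq hN).2 (by simp)
  have hac' : ¬G.Adj a c := hG.2.1.not_adj_of_four hvb hva hvc hab'.symm hbc'
  have hcd : G.Adj c d := by
    rcases hy with rfl | rfl
    · exact absurd hcy.symm hac'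
    · exact hcy
  exact ⟨hbc', hcd, hac', hG.2.1.not_adj_of_four hvc hvb hvd hbc'.symm hcd,
    fun h => hG.fst_ne_of_adj h had⟩

lemma le_deg_of_mem_neighborSet (hG : CliqueSaturated 4 n G)
    (hN : G.neighborSet v = {a, b, c, d}) (had : a.1 = d.1) (hab : a.1 ≠ b.1) (hac : a.1 ≠ c.1)
    (hbc : b.1 ≠ c.1) (hac' : ¬G.Adj a c) (hbd : ¬G.Adj b d) :
    ∀ w ∈ G.neighborSet v, n - 2 ≤ deg G w := by
  have hN' : G.neighborSet v = {a, c, b, d} := by rw [hN, Set.insert_comm b c]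
  have hdoubled (t : Fin n) (ht : t ∉ ({a.2, d.2} : Finset (Fin n))) :=
    hG.adj_of_mem_doubled_part hN had hab hac hbc (u := (a.1, t)) rfl
      (fun h => ht (by simp [← congrArg Prod.snd h]))
      (fun h => ht (by simp [← congrArg Prod.snd h]))
  have hsub {s : Finset (Fin n)} (hs : s.card ≤ 2) : n - 2 ≤ n - s.card := Nat.sub_le_sub_left hs n
  have hdega : n - 2 ≤ deg G a := (hsub (by simp)).trans <|
    le_deg_of_forall_adj (i := c.1) (s := {c.2}) fun t ht => by
      obtain ⟨y, rfl | rfl, hby, -, huy⟩ := hG.exists_adj_of_mem_single_part hN' had hac hab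
        hbc.symm (u := (c.1, t)) rfl (fun h => ht (Finset.mem_singleton.2 (congrArg Prod.snd h)))
      · exact huy.symm
      · exact absurd hby hbd
  have hdegd : n - 2 ≤ deg G d := (hsub (by simp)).trans <|
    le_deg_of_forall_adj (i := b.1) (s := {b.2}) fun t ht => by
      obtain ⟨y, rfl | rfl, hcy, -, huy⟩ := hG.exists_adj_of_mem_single_part hN had hab hac
        hbc (u := (b.1, t)) rfl (fun h => ht (Finset.mem_singleton.2 (congrArg Prod.snd h)))
      · exact absurd hcy.symm hac'
      · exact huy.symm
  have hdegb : n - 2 ≤ deg G b := (hsub Finset.card_le_two).trans <|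
    le_deg_of_forall_adj fun t ht => (hdoubled t ht).2.1.symm
  have hdegc : n - 2 ≤ deg G c := (hsub Finset.card_le_two).trans <|
    le_deg_of_forall_adj fun t ht => (hdoubled t ht).2.2.symm
  rw [hN]
  rintro w (rfl | rfl | rfl | rfl) <;> assumption

end CliqueSaturated

/-- In a `(K_4,K_4[n])`-saturated graph with `n ≥ 3`, a vertex `v` of degree exactly `4`
has one neighbour in each of two parts and two neighbours in one part; its neighbourhood
induces a path beginning and ending with the two vertices in the same part; and all
neighbours of `v` have degree at least `n - 2`. -/
theorem stmt_1 (n : ℕ) (hn : 3 ≤ n) (G : SimpleGraph (Fin 4 × Fin n))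
    (hG : CliqueSaturated 4 n G) (v : Fin 4 × Fin n) (hv : deg G v = 4) :
    (∃ a b c d : Fin 4 × Fin n,
      G.neighborSet v = {a, b, c, d} ∧
      -- `a` and `d` lie in the same part, `b` and `c` each in their own part
      a.1 = d.1 ∧ a ≠ d ∧ a.1 ≠ b.1 ∧ a.1 ≠ c.1 ∧ b.1 ≠ c.1 ∧
      -- the neighbourhood induces the path `a - b - c - d`
      G.Adj a b ∧ G.Adj b c ∧ G.Adj c d ∧
      ¬ G.Adj a c ∧ ¬ G.Adj b d ∧ ¬ G.Adj a d) ∧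
    ∀ w ∈ G.neighborSet v, n - 2 ≤ deg G w := by
  obtain ⟨a, b, c, d, hN, had, hne, hab, hac, hbc, hab'⟩ := hG.exists_neighborSet_eq_and_adj hn hv
  obtain ⟨hbc', hcd, hac', hbd, had'⟩ := hG.neighborSet_path_of_adj hn hN had hab hac hbc hab'
  exact ⟨⟨a, b, c, d, hN, had, hne, hab, hac, hbc, hab', hbc', hcd, hac', hbd, had'⟩,
    hG.le_deg_of_mem_neighborSet hN had hab hac hbc hac' hbd⟩
end

section
/- Let k ≥ 5 and let G be a (K_4, K_4[n])-saturated graph. Then there are at most 24k²(2k²)^{2k²} vertices v such that 5 ≤ deg(v) ≤ k and v is adjacent to another vertex of degree between 5 and k. -/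
open SimpleGraph

section Aux

variable {n : ℕ} {G : SimpleGraph (Fin 4 × Fin n)}

noncomputable def Fnbr (G : SimpleGraph (Fin 4 × Fin n)) (x : Fin 4 × Fin n) :
    Finset (Fin 4 × Fin n) :=
  (G.neighborSet x).toFinite.toFinset

lemma mem_Fnbr {x y : Fin 4 × Fin n} : y ∈ Fnbr G x ↔ G.Adj x y := by
  simp [Fnbr]

lemma card_Fnbr (G : SimpleGraph (Fin 4 × Fin n)) (x : Fin 4 × Fin n) :
    (Fnbr G x).card = deg G x := by
  rw [deg, Set.ncard_eq_toFinset_card _ (G.neighborSet x).toFinite]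
  rfl

lemma noK4 (hcf : G.CliqueFree 4) {a b c d : Fin 4 × Fin n}
    (hab : G.Adj a b) (hac : G.Adj a c) (had : G.Adj a d)
    (hbc : G.Adj b c) (hbd : G.Adj b d) (hcd : G.Adj c d) : False := by
  refine hcf {a, b, c, d} ⟨?_, ?_⟩
  · intro u hu v hv huv
    simp only [Finset.coe_insert, Set.mem_insert_iff, Finset.coe_singleton,
      Set.mem_singleton_iff] at hu hv
    rcases hu with rfl | rfl | rfl | rfl <;> rcases hv with rfl | rfl | rfl | rfl <;>
      first
        | exact absurd rfl huv
        | assumption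
        | exact hab.symm
        | exact hac.symm
        | exact had.symm
        | exact hbc.symm
        | exact hbd.symm
        | exact hcd.symm
  · rw [Finset.card_insert_of_notMem (by simp [hab.ne, hac.ne, had.ne]),
      Finset.card_insert_of_notMem (by simp [hbc.ne, hbd.ne]),
      Finset.card_insert_of_notMem (by simp [hcd.ne]), Finset.card_singleton]

lemma sat_edge (hG : CliqueSaturated 4 n G) {x y : Fin 4 × Fin n}
    (hxy : x.1 ≠ y.1) (hna : ¬ G.Adj x y) :
    ∃ p q, G.Adj p q ∧ G.Adj x p ∧ G.Adj x q ∧ G.Adj y p ∧ G.Adj y q := by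
  classical
  have hbl : (blowup (⊤ : SimpleGraph (Fin 4)) n).Adj x y := by
    simpa [blowup] using hxy
  have h4 := hG.2.2 hbl hna
  rw [CliqueFree] at h4
  push_neg at h4
  obtain ⟨t, htc, htcard⟩ := h4
  have hxyne : x ≠ y := fun h => hxy (by rw [h])
  have key0 : ∀ a b : Fin 4 × Fin n, a ∈ t → b ∈ t → a ≠ b →
      ¬(a = x ∧ b = y) → ¬(a = y ∧ b = x) → G.Adj a b := by
    intro a b ha hb hab h1 h2
    have h := htc ha hb hab
    rw [sup_adj, fromEdgeSet_adj] at h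
    rcases h with h | ⟨h, -⟩
    · exact h
    · simp only [Set.mem_singleton_iff, Sym2.eq_iff] at h
      tauto
  have hxt : x ∈ t ∧ y ∈ t := by
    by_contra hcon
    refine hG.2.1 t ⟨?_, htcard⟩
    intro a ha b hb hab
    refine key0 a b ha hb hab ?_ ?_
    · rintro ⟨rfl, rfl⟩; exact hcon ⟨Finset.mem_coe.mp ha, Finset.mem_coe.mp hb⟩
    · rintro ⟨rfl, rfl⟩; exact hcon ⟨Finset.mem_coe.mp hb, Finset.mem_coe.mp ha⟩
  obtain ⟨hxt, hyt⟩ := hxt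
  have hsub : ({x, y} : Finset (Fin 4 × Fin n)) ⊆ t := by
    intro z hz; simp only [Finset.mem_insert, Finset.mem_singleton] at hz
    rcases hz with rfl | rfl <;> assumption
  have hc2 : (t \ {x, y}).card = 2 := by
    rw [Finset.card_sdiff_of_subset hsub, htcard, Finset.card_insert_of_notMem (by simp [hxyne]),
      Finset.card_singleton]
  obtain ⟨p, q, hpqne, hpq⟩ := Finset.card_eq_two.mp hc2
  have hp : p ∈ t ∧ p ≠ x ∧ p ≠ y := by
    have : p ∈ t \ ({x, y} : Finset _) := hpq ▸ Finset.mem_insert_self _ _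
    rw [Finset.mem_sdiff] at this
    simp only [Finset.mem_insert, Finset.mem_singleton] at this
    tauto
  have hq : q ∈ t ∧ q ≠ x ∧ q ≠ y := by
    have : q ∈ t \ ({x, y} : Finset _) := hpq ▸ by simp
    rw [Finset.mem_sdiff] at this
    simp only [Finset.mem_insert, Finset.mem_singleton] at this
    tauto
  obtain ⟨hpt, hpx, hpy⟩ := hp
  obtain ⟨hqt, hqx, hqy⟩ := hq
  exact ⟨p, q,
    key0 p q hpt hqt hpqne (by tauto) (by tauto),
    key0 x p hxt hpt (Ne.symm hpx) (by tauto) (by tauto),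
    key0 x q hxt hqt (Ne.symm hqx) (by tauto) (by tauto),
    key0 y p hyt hpt (Ne.symm hpy) (by tauto) (by tauto),
    key0 y q hyt hqt (Ne.symm hqy) (by tauto) (by tauto)⟩

end Aux

section Iter

variable {n k : ℕ} {G : SimpleGraph (Fin 4 × Fin n)}

lemma iter (hk : 5 ≤ k) (hcf : G.CliqueFree 4)
    (hsat : ∀ x y : Fin 4 × Fin n, x.1 ≠ y.1 → ¬ G.Adj x y →
      ∃ p q, G.Adj p q ∧ G.Adj x p ∧ G.Adj x q ∧ G.Adj y p ∧ G.Adj y q)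
    (A B : Fin 4) (hAB : A ≠ B) (W₁ : Finset (Fin 4 × Fin n))
    (hW₁ : ∀ w ∈ W₁, w.1 = B ∧ deg G w ≤ k ∧
      ∃ v : Fin 4 × Fin n, v.1 = A ∧ G.Adj v w ∧ deg G v ≤ k)
    (hbig : (2 * k ^ 2) ^ (k ^ 2 + 2) ≤ W₁.card) :
    ∀ j : ℕ, j ≤ k ^ 2 + 1 →
      ∃ (E : Finset ((Fin 4 × Fin n) × (Fin 4 × Fin n))) (W : Finset (Fin 4 × Fin n)),
        E.card = j ∧ W ⊆ W₁ ∧ (∀ e ∈ E, G.Adj e.1 e.2) ∧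
        (∀ w ∈ W, ∀ e ∈ E, G.Adj w e.1 ∧ G.Adj w e.2) ∧
        (2 * k ^ 2) ^ (k ^ 2 + 2 - j) ≤ W.card := by
  classical
  have hk0 : 0 < k := by omega
  have h2k2 : 0 < 2 * k ^ 2 := by positivity
  intro j
  induction j with
  | zero =>
    intro _
    exact ⟨∅, W₁, by simp, Finset.Subset.refl _, by simp, by simp, by simpa using hbig⟩
  | succ j ih =>
    intro hj
    obtain ⟨E, W, hEcard, hWsub, hEadj, hWE, hWcard⟩ := ih (by omega)
    set m : ℕ := (2 * k ^ 2) ^ (k ^ 2 + 2 - (j + 1)) with hm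
    have hm1 : 1 ≤ m := Nat.one_le_iff_ne_zero.mpr (pow_ne_zero _ (by omega))
    have hWbig : 2 * k ^ 2 * m ≤ W.card := by
      have hexp : k ^ 2 + 2 - j = (k ^ 2 + 2 - (j + 1)) + 1 := by omega
      calc 2 * k ^ 2 * m = (2 * k ^ 2) ^ (k ^ 2 + 2 - j) := by
            rw [hexp, pow_succ (2 * k ^ 2) (k ^ 2 + 2 - (j + 1)), ← hm, Nat.mul_comm]
        _ ≤ W.card := hWcard
    -- pick w* ∈ W with its partner v*
    have hWne : W.Nonempty := Finset.card_pos.mp (by nlinarith)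
    obtain ⟨ws, hws⟩ := hWne
    obtain ⟨hwsB, hwsdeg, vs, hvsA, hvsws, hvsdeg⟩ := hW₁ ws (hWsub hws)
    -- non-neighbors of v* in W
    set Wna : Finset (Fin 4 × Fin n) := W.filter (fun w => ¬ G.Adj vs w) with hWna
    have hWnacard : W.card ≤ Wna.card + k := by
      have hsplit : W.card ≤ Wna.card + (W.filter (fun w => G.Adj vs w)).card := by
        have hsub2 : W ⊆ Wna ∪ W.filter (fun w => G.Adj vs w) := by
          intro w hw
          by_cases h : G.Adj vs w
          · exact Finset.mem_union_right _ (Finset.mem_filter.mpr ⟨hw, h⟩)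
          · exact Finset.mem_union_left _ (Finset.mem_filter.mpr ⟨hw, h⟩)
        calc W.card ≤ (Wna ∪ W.filter (fun w => G.Adj vs w)).card :=
              Finset.card_le_card hsub2
          _ ≤ Wna.card + (W.filter (fun w => G.Adj vs w)).card :=
              Finset.card_union_le _ _
      have hsubN : W.filter (fun w => G.Adj vs w) ⊆ Fnbr G vs := by
        intro w hw
        rw [mem_Fnbr]
        exact (Finset.mem_filter.mp hw).2
      have : (W.filter (fun w => G.Adj vs w)).card ≤ k := by
        calc (W.filter (fun w => G.Adj vs w)).card ≤ (Fnbr G vs).card :=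
              Finset.card_le_card hsubN
          _ = deg G vs := card_Fnbr G vs
          _ ≤ k := hvsdeg
      omega
    -- the choice function
    set f : (Fin 4 × Fin n) → (Fin 4 × Fin n) × (Fin 4 × Fin n) := fun w =>
      if h : ∃ e : (Fin 4 × Fin n) × (Fin 4 × Fin n), G.Adj e.1 e.2 ∧ G.Adj vs e.1 ∧
          G.Adj vs e.2 ∧ G.Adj w e.1 ∧ G.Adj w e.2 then h.choose else (ws, ws) with hf
    have hfspec : ∀ w ∈ Wna, G.Adj (f w).1 (f w).2 ∧ G.Adj vs (f w).1 ∧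
        G.Adj vs (f w).2 ∧ G.Adj w (f w).1 ∧ G.Adj w (f w).2 := by
      intro w hw
      rw [Finset.mem_filter] at hw
      obtain ⟨hwW, hnadj⟩ := hw
      have hwB : w.1 = B := (hW₁ w (hWsub hwW)).1
      have hne : vs.1 ≠ w.1 := by rw [hvsA, hwB]; exact hAB
      obtain ⟨p, q, h1, h2, h3, h4, h5⟩ := hsat vs w hne hnadj
      have hex : ∃ e : (Fin 4 × Fin n) × (Fin 4 × Fin n), G.Adj e.1 e.2 ∧ G.Adj vs e.1 ∧
          G.Adj vs e.2 ∧ G.Adj w e.1 ∧ G.Adj w e.2 := ⟨(p, q), h1, h2, h3, h4, h5⟩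
      rw [hf]
      simp only [dif_pos hex]
      exact hex.choose_spec
    have hmaps : ∀ w ∈ Wna, f w ∈ (Fnbr G vs) ×ˢ (Fnbr G vs) := by
      intro w hw
      obtain ⟨-, h2, h3, -, -⟩ := hfspec w hw
      rw [Finset.mem_product, mem_Fnbr, mem_Fnbr]
      exact ⟨h2, h3⟩
    have hprodcard : ((Fnbr G vs) ×ˢ (Fnbr G vs)).card ≤ k ^ 2 := by
      rw [Finset.card_product]
      have h := (card_Fnbr G vs) ▸ hvsdeg
      calc (Fnbr G vs).card * (Fnbr G vs).card ≤ k * k := Nat.mul_le_mul h h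
        _ = k ^ 2 := (sq k).symm
    have hprodne : ((Fnbr G vs) ×ˢ (Fnbr G vs)).Nonempty :=
      ⟨(ws, ws), by rw [Finset.mem_product, mem_Fnbr]; exact ⟨hvsws, hvsws⟩⟩
    have hmul : ((Fnbr G vs) ×ˢ (Fnbr G vs)).card * m ≤ Wna.card := by
      have h1 : k ^ 2 * m + k ≤ W.card := by
        have : k ≤ k ^ 2 * m := by nlinarith
        nlinarith
      calc ((Fnbr G vs) ×ˢ (Fnbr G vs)).card * m ≤ k ^ 2 * m :=
            Nat.mul_le_mul_right _ hprodcard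
        _ ≤ Wna.card := by omega
    obtain ⟨es, hesmem, hescount⟩ :=
      Finset.exists_le_card_fiber_of_mul_le_card_of_maps_to hmaps hprodne hmul
    set W' : Finset (Fin 4 × Fin n) := Wna.filter (fun w => f w = es) with hW'
    have hW'sub : W' ⊆ Wna := Finset.filter_subset _ _
    have hW'card : m ≤ W'.card := hescount
    have hW'ne : W'.Nonempty := Finset.card_pos.mp (by omega)
    obtain ⟨w₀, hw₀⟩ := hW'ne
    have hw₀spec := hfspec w₀ (hW'sub hw₀)
    have hw₀f : f w₀ = es := (Finset.mem_filter.mp hw₀).2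
    rw [hw₀f] at hw₀spec
    obtain ⟨hesadj, hvse1, hvse2, -, -⟩ := hw₀spec
    have hesnew : es ∉ E := by
      intro hin
      exact noK4 hcf hvsws hvse1 hvse2 (hWE ws hws es hin).1 (hWE ws hws es hin).2 hesadj
    refine ⟨insert es E, W', ?_, ?_, ?_, ?_, ?_⟩
    · rw [Finset.card_insert_of_notMem hesnew, hEcard]
    · exact hW'sub.trans ((Finset.filter_subset _ _).trans hWsub)
    · intro e he
      rcases Finset.mem_insert.mp he with rfl | he
      · exact hesadj
      · exact hEadj e he
    · intro w hw e he
      have hwWna : w ∈ Wna := hW'sub hw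
      have hwW : w ∈ W := (Finset.mem_filter.mp hwWna).1
      rcases Finset.mem_insert.mp he with rfl | he
      · have hspec := hfspec w hwWna
        rw [(Finset.mem_filter.mp hw).2] at hspec
        exact ⟨hspec.2.2.2.1, hspec.2.2.2.2⟩
      · exact hWE w hwW e he
    · exact hW'card

end Iter

/-- For any `k ≥ 5`, in a `(K_4,K_4[n])`-saturated graph there are at most
`24k²(2k²)^(2k²)` vertices `v` with `5 ≤ deg v ≤ k` adjacent to another vertex of
degree between `5` and `k`. -/
theorem stmt_3 (k n : ℕ) (hk : 5 ≤ k) (G : SimpleGraph (Fin 4 × Fin n))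
    (hG : CliqueSaturated 4 n G) :
    {v : Fin 4 × Fin n | 5 ≤ deg G v ∧ deg G v ≤ k ∧
        ∃ w, G.Adj v w ∧ 5 ≤ deg G w ∧ deg G w ≤ k}.ncard ≤
      24 * k ^ 2 * (2 * k ^ 2) ^ (2 * k ^ 2) := by
  classical
  have hk0 : 0 < k := by omega
  set S : Set (Fin 4 × Fin n) := {v : Fin 4 × Fin n | 5 ≤ deg G v ∧ deg G v ≤ k ∧
      ∃ w, G.Adj v w ∧ 5 ≤ deg G w ∧ deg G w ≤ k} with hS
  by_contra hcon
  push_neg at hcon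
  have hfin : S.Finite := Set.toFinite _
  set Sf : Finset (Fin 4 × Fin n) := hfin.toFinset with hSf
  have hSfcard : Sf.card = S.ncard := (Set.ncard_eq_toFinset_card _ hfin).symm
  set wfun : (Fin 4 × Fin n) → (Fin 4 × Fin n) := fun v =>
    if h : ∃ w, G.Adj v w ∧ 5 ≤ deg G w ∧ deg G w ≤ k then h.choose else v with hwfun
  have hwspec : ∀ v ∈ S, G.Adj v (wfun v) ∧ 5 ≤ deg G (wfun v) ∧ deg G (wfun v) ≤ k := by
    intro v hv
    obtain ⟨-, -, hex⟩ := hv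
    rw [hwfun]
    simp only [dif_pos hex]
    exact hex.choose_spec
  set M : ℕ := k * (2 * k ^ 2) ^ (k ^ 2 + 2) with hM
  -- numeric bound
  have hnum : 16 * M ≤ 24 * k ^ 2 * (2 * k ^ 2) ^ (2 * k ^ 2) := by
    have hk2 : 25 ≤ k ^ 2 := by nlinarith
    have h1 : (2 * k ^ 2) ^ (k ^ 2 + 2) ≤ (2 * k ^ 2) ^ (2 * k ^ 2) :=
      Nat.pow_le_pow_right (by omega) (by omega)
    calc 16 * M = (16 * k) * (2 * k ^ 2) ^ (k ^ 2 + 2) := by rw [hM]; ring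
      _ ≤ (24 * k ^ 2) * (2 * k ^ 2) ^ (2 * k ^ 2) :=
          Nat.mul_le_mul (by nlinarith) h1
  have hM16 : (Finset.univ : Finset (Fin 4 × Fin 4)).card * M ≤ Sf.card := by
    have hu : (Finset.univ : Finset (Fin 4 × Fin 4)).card = 16 := by simp
    rw [hu, hSfcard]
    omega
  obtain ⟨AB, -, hfiber⟩ :=
    Finset.exists_le_card_fiber_of_mul_le_card_of_maps_to
      (f := fun v : Fin 4 × Fin n => ((v.1, (wfun v).1) : Fin 4 × Fin 4))
      (t := Finset.univ) (fun a _ => Finset.mem_univ _) Finset.univ_nonempty hM16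
  obtain ⟨A, B⟩ := AB
  set V₁ : Finset (Fin 4 × Fin n) :=
    Sf.filter (fun v => ((v.1, (wfun v).1) : Fin 4 × Fin 4) = (A, B)) with hV₁def
  have hV₁card : M ≤ V₁.card := hfiber
  have hV₁S : ∀ v ∈ V₁, v ∈ S ∧ v.1 = A ∧ (wfun v).1 = B := by
    intro v hv
    rw [hV₁def, Finset.mem_filter] at hv
    obtain ⟨hvSf, heq⟩ := hv
    rw [Prod.mk.injEq] at heq
    exact ⟨(Set.Finite.mem_toFinset hfin).mp hvSf, heq.1, heq.2⟩
  have hV₁ne : V₁.Nonempty := by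
    apply Finset.card_pos.mp
    have : 0 < M := by positivity
    omega
  have hAB : A ≠ B := by
    obtain ⟨v₀, hv₀⟩ := hV₁ne
    obtain ⟨hv₀S, hA, hB⟩ := hV₁S v₀ hv₀
    have hadj := (hwspec v₀ hv₀S).1
    have hbl := hG.1 hadj
    have hne : v₀.1 ≠ (wfun v₀).1 := by simpa [blowup] using hbl
    rw [hA, hB] at hne
    exact hne
  set W₁ : Finset (Fin 4 × Fin n) := V₁.image wfun with hW₁def
  have hW₁prop : ∀ w ∈ W₁, w.1 = B ∧ deg G w ≤ k ∧
      ∃ v : Fin 4 × Fin n, v.1 = A ∧ G.Adj v w ∧ deg G v ≤ k := by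
    intro w hw
    obtain ⟨v, hv, rfl⟩ := Finset.mem_image.mp hw
    obtain ⟨hvS, hA, hB⟩ := hV₁S v hv
    obtain ⟨hadj, -, hdegw⟩ := hwspec v hvS
    obtain ⟨-, hdegv, -⟩ := hvS
    exact ⟨hB, hdegw, v, hA, hadj, hdegv⟩
  have himg : V₁.card ≤ k * W₁.card := by
    apply Finset.card_le_mul_card_image
    intro b hb
    have hdegb : deg G b ≤ k := (hW₁prop b hb).2.1
    have hsubN : V₁.filter (fun v => wfun v = b) ⊆ Fnbr G b := by
      intro v hv
      rw [Finset.mem_filter] at hv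
      obtain ⟨hvV₁, hvb⟩ := hv
      obtain ⟨hvS, -, -⟩ := hV₁S v hvV₁
      have hadj := (hwspec v hvS).1
      rw [hvb] at hadj
      rw [mem_Fnbr]
      exact hadj.symm
    calc (V₁.filter (fun v => wfun v = b)).card ≤ (Fnbr G b).card :=
          Finset.card_le_card hsubN
      _ = deg G b := card_Fnbr G b
      _ ≤ k := hdegb
  have hW₁big : (2 * k ^ 2) ^ (k ^ 2 + 2) ≤ W₁.card := by
    apply Nat.le_of_mul_le_mul_left _ hk0
    calc k * (2 * k ^ 2) ^ (k ^ 2 + 2) = M := hM.symm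
      _ ≤ V₁.card := hV₁card
      _ ≤ k * W₁.card := himg
  obtain ⟨E, W, hEcard, hWsub, hEadj, hWEadj, hWcard⟩ :=
    iter hk hG.2.1 (fun x y hxy hna => sat_edge hG hxy hna) A B hAB W₁ hW₁prop hW₁big
      (k ^ 2 + 1) le_rfl
  have hexp1 : k ^ 2 + 2 - (k ^ 2 + 1) = 1 := by omega
  rw [hexp1, pow_one] at hWcard
  have hWne : W.Nonempty := Finset.card_pos.mp (by nlinarith)
  obtain ⟨w, hw⟩ := hWne
  have hdegw : deg G w ≤ k := (hW₁prop w (hWsub hw)).2.1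
  have hEsub : E ⊆ (Fnbr G w) ×ˢ (Fnbr G w) := by
    intro e he
    rw [Finset.mem_product, mem_Fnbr, mem_Fnbr]
    exact hWEadj w hw e he
  have hfinal : k ^ 2 + 1 ≤ k * k := by
    have hFc : (Fnbr G w).card ≤ k := le_of_eq_of_le (card_Fnbr G w) hdegw
    calc k ^ 2 + 1 = E.card := hEcard.symm
      _ ≤ ((Fnbr G w) ×ˢ (Fnbr G w)).card := Finset.card_le_card hEsub
      _ = (Fnbr G w).card * (Fnbr G w).card := Finset.card_product _ _
      _ ≤ k * k := Nat.mul_le_mul hFc hFc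
  have : k ^ 2 = k * k := sq k
  omega
end

section
/- Let r ≥ 2, n ∈ ℕ, and let H be a connected graph containing a vertex v such that H \ v has r connected components. Then every (H, H[n])-partite-saturated subgraph of H[n] has at least (r−1)n² edges. -/
open SimpleGraph

/-- If `H` is connected and has a vertex `v` such that `H \ v` has `r ≥ 2` components,
then every `(H,H[n])`-partite-saturated subgraph of `H[n]` has at least `(r-1)n²` edges. -/
theorem stmt_6 {V : Type*} [Fintype V] (H : SimpleGraph V) (r n : ℕ) (hr : 2 ≤ r)
    (hconn : H.Connected)
    (hcut : ∃ v : V, Nat.card (H.induce {u : V | u ≠ v}).ConnectedComponent = r)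
    (G : SimpleGraph (V × Fin n)) (hG : PartiteSaturated H G) :
    (r - 1) * n ^ 2 ≤ G.edgeSet.ncard := by
  classical
  obtain ⟨v, hv⟩ := hcut
  obtain ⟨hGle, hfree, hsat⟩ := hG
  set H' := H.induce {u : V | u ≠ v} with hH'
  let K : H'.ConnectedComponent → V → Prop := fun c a =>
    a = v ∨ ∃ h : a ≠ v, H'.connectedComponentMk ⟨a, h⟩ = c
  let Good : H'.ConnectedComponent → Fin n → Prop := fun c j =>
    ∃ g : V → Fin n, g v = j ∧
      ∀ a b : V, K c a → K c b → H.Adj a b → G.Adj (a, g a) (b, g b)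
  -- every component contains a neighbour of v
  have hwalk : ∀ {a b : V} (_ : H.Walk a b) (_ : b = v) (ha : a ≠ v),
      ∃ w : {u : V | u ≠ v}, H.Adj v w.1 ∧ H'.Reachable ⟨a, ha⟩ w := by
    intro a b p
    induction p with
    | nil => intro hb ha; exact absurd hb ha
    | @cons x y z h q ih =>
      intro hb ha
      by_cases hy : y = v
      · refine ⟨⟨x, ha⟩, ?_, Reachable.refl _⟩
        rw [hy] at h
        exact h.symm
      · obtain ⟨w, hw1, hw2⟩ := ih hb hy
        have hadj : H'.Adj ⟨x, ha⟩ ⟨y, hy⟩ := h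
        exact ⟨w, hw1, hadj.reachable.trans hw2⟩
  have hrep : ∀ c : H'.ConnectedComponent,
      ∃ u : {u : V | u ≠ v}, H.Adj v u.1 ∧ H'.connectedComponentMk u = c := by
    intro c
    obtain ⟨u0, hu0⟩ := c.exists_rep
    obtain ⟨w, hw1, hw2⟩ := hwalk (hconn.preconnected u0.1 v).some rfl u0.2
    refine ⟨w, hw1, ?_⟩
    rw [← hu0]
    exact (ConnectedComponent.sound hw2).symm
  -- for each j there is a bad component
  have hbad : ∀ j : Fin n, ∃ c, ¬ Good c j := by
    intro j
    by_contra hall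
    push_neg at hall
    choose g hg1 hg2 using hall
    apply hfree
    set f : V → Fin n :=
      fun a => if h : a = v then j else g (H'.connectedComponentMk ⟨a, h⟩) a with hfdef
    have hfv : f v = j := by simp [hfdef]
    have hfnv : ∀ (a : V) (h : a ≠ v), f a = g (H'.connectedComponentMk ⟨a, h⟩) a := by
      intro a h; simp [hfdef, h]
    refine ⟨f, ?_⟩
    intro a b hab
    by_cases ha : a = v
    · by_cases hb : b = v
      · rw [ha, hb] at hab
        exact absurd hab (H.irrefl)
      · have h2 := hg2 (H'.connectedComponentMk ⟨b, hb⟩) v b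
          (Or.inl rfl) (Or.inr ⟨hb, rfl⟩) (ha ▸ hab)
        rw [hg1] at h2
        rw [ha, hfv, hfnv b hb]
        exact h2
    · by_cases hb : b = v
      · have h2 := hg2 (H'.connectedComponentMk ⟨a, ha⟩) a v
          (Or.inr ⟨ha, rfl⟩) (Or.inl rfl) (hb ▸ hab)
        rw [hg1] at h2
        rw [hb, hfv, hfnv a ha]
        exact h2
      · have hcb : H'.connectedComponentMk ⟨b, hb⟩ = H'.connectedComponentMk ⟨a, ha⟩ := by
          refine ConnectedComponent.sound ?_
          have hadj : H'.Adj ⟨a, ha⟩ ⟨b, hb⟩ := hab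
          exact hadj.symm.reachable
        have h2 := hg2 (H'.connectedComponentMk ⟨a, ha⟩) a b
          (Or.inr ⟨ha, rfl⟩) (Or.inr ⟨hb, hcb⟩) hab
        rw [hfnv a ha, hfnv b hb, hcb]
        exact h2
  -- saturation claim
  have hkey : ∀ (j : Fin n) (c₀ : H'.ConnectedComponent), ¬ Good c₀ j →
      ∀ (u : V) (hu : u ≠ v), H.Adj v u →
      H'.connectedComponentMk ⟨u, hu⟩ ≠ c₀ → ∀ i : Fin n, G.Adj (v, j) (u, i) := by
    intro j c₀ hc₀ u hu hvu hcne i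
    by_contra hne
    have hbl : (blowup H n).Adj (v, j) (u, i) := hvu
    obtain ⟨f, hf⟩ := hsat hbl hne
    have hmem : ∀ {x y : V × Fin n},
        (G ⊔ SimpleGraph.fromEdgeSet {s((v, j), (u, i))}).Adj x y →
        G.Adj x y ∨ (x = (v, j) ∧ y = (u, i)) ∨ (x = (u, i) ∧ y = (v, j)) := by
      intro x y hxy
      rcases hxy with h | h
      · exact Or.inl h
      · rw [fromEdgeSet_adj] at h
        rcases h with ⟨hmem', _⟩
        rw [Set.mem_singleton_iff, Sym2.eq_iff] at hmem'
        tauto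
    have hfv : f v = j := by
      by_contra hfv
      apply hfree
      refine ⟨f, fun a b hab => ?_⟩
      rcases hmem (hf hab) with h | ⟨h1, h2⟩ | ⟨h1, h2⟩
      · exact h
      · rw [Prod.mk.injEq] at h1
        exact absurd (h1.1 ▸ h1.2) hfv
      · rw [Prod.mk.injEq] at h2
        exact absurd (h2.1 ▸ h2.2) hfv
    apply hc₀
    refine ⟨f, hfv, ?_⟩
    intro a b ha hb hab
    rcases hmem (hf hab) with h | ⟨h1, h2⟩ | ⟨h1, h2⟩
    · exact h
    · exfalso
      rw [Prod.mk.injEq] at h2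
      rcases hb with h' | ⟨h', hmk⟩
      · exact hu (h2.1 ▸ h')
      · refine hcne ?_
        have hbu : b = u := h2.1
        subst hbu
        exact hmk
    · exfalso
      rw [Prod.mk.injEq] at h1
      rcases ha with h' | ⟨h', hmk⟩
      · exact hu (h1.1 ▸ h')
      · refine hcne ?_
        have hau : a = u := h1.1
        subst hau
        exact hmk
  -- choose data
  choose c₀ hc₀ using hbad
  choose rep hrep1 hrep2 using hrep
  haveI : Fintype H'.ConnectedComponent := Fintype.ofFinite _
  have hcardC : Fintype.card H'.ConnectedComponent = r := by
    rw [← Nat.card_eq_fintype_card]; exact hv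
  have hcard : ∀ j : Fin n,
      Fintype.card {c : H'.ConnectedComponent // c ≠ c₀ j} = r - 1 := by
    intro j
    have := Fintype.card_subtype_compl (fun c : H'.ConnectedComponent => c = c₀ j)
    rw [Fintype.card_subtype_eq, hcardC] at this
    exact this
  let ε : ∀ j : Fin n, Fin (r - 1) ≃ {c : H'.ConnectedComponent // c ≠ c₀ j} :=
    fun j => (Fintype.equivFinOfCardEq (hcard j)).symm
  let Φ : Fin n × Fin (r - 1) × Fin n → Sym2 (V × Fin n) :=
    fun q => s((v, q.1), ((rep (ε q.1 q.2.1).1).1, q.2.2))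
  have hrange : Set.range Φ ⊆ G.edgeSet := by
    rintro e ⟨⟨j, t, i⟩, rfl⟩
    rw [SimpleGraph.mem_edgeSet]
    exact hkey j (c₀ j) (hc₀ j) _ (rep (ε j t).1).2 (hrep1 _)
      (by rw [Subtype.coe_eta, hrep2]; exact (ε j t).2) i
  have hrepinj : Function.Injective rep := by
    intro c c' h
    rw [← hrep2 c, ← hrep2 c', h]
  have hinj : Function.Injective Φ := by
    rintro ⟨j, t, i⟩ ⟨j', t', i'⟩ h
    simp only [Φ, Sym2.eq_iff] at h
    rcases h with ⟨h1, h2⟩ | ⟨h1, h2⟩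
    · rw [Prod.mk.injEq] at h1 h2
      obtain ⟨-, hj⟩ := h1
      obtain ⟨hu, hi⟩ := h2
      subst hj
      have hval : (ε j t).1 = (ε j t').1 := hrepinj (Subtype.ext hu)
      have ht : t = t' := (ε j).injective (Subtype.ext hval)
      simp [ht, hi]
    · rw [Prod.mk.injEq] at h1
      exact absurd h1.1.symm (rep (ε j' t').1).2
  have hfin : G.edgeSet.Finite := Set.toFinite _
  calc (r - 1) * n ^ 2 = Nat.card (Fin n × Fin (r - 1) × Fin n) := by
        simp [Nat.card_prod]; ring
    _ = (Set.range Φ).ncard := by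
        rw [← Set.ncard_univ, ← Set.image_univ, Set.ncard_image_of_injective _ hinj]
    _ ≤ G.edgeSet.ncard := Set.ncard_le_ncard hrange hfin
end

section
/- For any r ≥ 2 and n ∈ ℕ, every (K_{1,r}, K_{1,r}[n])-partite-saturated graph has exactly (r−1)n² edges. -/
open SimpleGraph
open Finset

lemma key {r n : ℕ} (G : SimpleGraph ((Unit ⊕ Fin r) × Fin n))
    (hG : PartiteSaturated (completeBipartiteGraph Unit (Fin r)) G) (i : Fin n) :
    ∃ j : Fin r, (∀ k, ¬ G.Adj (Sum.inl (), i) (Sum.inr j, k)) ∧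
      ∀ j' : Fin r, j' ≠ j → ∀ k, G.Adj (Sum.inl (), i) (Sum.inr j', k) := by
  obtain ⟨hle, hnocopy, hsat⟩ := hG
  have hex : ∃ j : Fin r, ∀ k, ¬ G.Adj (Sum.inl (), i) (Sum.inr j, k) := by
    by_contra h
    push_neg at h
    choose g hg using h
    refine hnocopy ⟨Sum.elim (fun _ => i) g, ?_⟩
    rintro (u | u) (v | v) huv
    · simp at huv
    · exact hg v
    · exact (hg u).symm
    · simp at huv
  obtain ⟨j, hj⟩ := hex
  refine ⟨j, hj, fun j' hj' k => ?_⟩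
  by_contra hna
  have hbl : (blowup (completeBipartiteGraph Unit (Fin r)) n).Adj (Sum.inl (), i)
      (Sum.inr j', k) := by
    simp [blowup]
  obtain ⟨f, hf⟩ := hsat hbl hna
  by_cases hi : f (Sum.inl ()) = i
  · have hadj := hf (show (completeBipartiteGraph Unit (Fin r)).Adj (Sum.inl ()) (Sum.inr j) by
      simp)
    rw [hi] at hadj
    cases hadj with
    | inl h => exact hj _ h
    | inr h =>
      have h1 := ((fromEdgeSet_adj _).mp h).1
      simp only [Set.mem_singleton_iff, Sym2.eq_iff, Prod.mk.injEq] at h1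
      rcases h1 with ⟨_, h2, _⟩ | ⟨⟨h2, _⟩, _⟩
      · exact hj' (Sum.inr.inj h2).symm
      · simp at h2
  · refine hnocopy ⟨f, fun u v huv => ?_⟩
    cases hf huv with
    | inl h => exact h
    | inr h =>
      exfalso
      have h1 := ((fromEdgeSet_adj _).mp h).1
      simp only [Set.mem_singleton_iff, Sym2.eq_iff, Prod.mk.injEq] at h1
      rcases huv with ⟨hu, hv⟩ | ⟨hu, hv⟩
      · obtain ⟨u', rfl⟩ := Sum.isLeft_iff.mp hu
        rcases h1 with ⟨⟨_, h2⟩, _⟩ | ⟨⟨h2, _⟩, _⟩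
        · exact hi h2
        · simp at h2
      · obtain ⟨v', rfl⟩ := Sum.isLeft_iff.mp hv
        obtain ⟨u', rfl⟩ := Sum.isRight_iff.mp hu
        rcases h1 with ⟨⟨h2, _⟩, _⟩ | ⟨_, _, h3⟩
        · simp at h2
        · exact hi h3

/-- For `r ≥ 2`, every `(K_{1,r},K_{1,r}[n])`-partite-saturated graph has exactly
`(r-1)n²` edges.  The star `K_{1,r}` is modelled as the complete bipartite graph with
parts `Unit` (the centre) and `Fin r` (the leaves). -/
theorem stmt_7 (r n : ℕ) (hr : 2 ≤ r)
    (G : SimpleGraph ((Unit ⊕ Fin r) × Fin n))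
    (hG : PartiteSaturated (completeBipartiteGraph Unit (Fin r)) G) :
    G.edgeSet.ncard = (r - 1) * n ^ 2 := by

  classical
  rcases Nat.eq_zero_or_pos n with hn | hn
  · subst hn
    have he : G.edgeSet = ∅ := by
      ext e
      refine ⟨fun h => ?_, fun h => h.elim⟩
      induction e with
      | _ x y => exact x.2.elim0
    simp [he]
  have hmiss := fun i => key G hG i
  choose missing h1 h2 using hmiss
  obtain ⟨hle, hnocopy, hsat⟩ := hG
  have hinjC : Function.Injective
      (fun p : Fin r × Fin n => ((Sum.inr p.1, p.2) : (Unit ⊕ Fin r) × Fin n)) := by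
    rintro ⟨a, b⟩ ⟨c, d⟩ h
    simpa [Prod.ext_iff] using h
  have hinjL : Function.Injective
      (fun i : Fin n => ((Sum.inl (), i) : (Unit ⊕ Fin r) × Fin n)) := by
    intro a b h
    simpa using h
  have hC : ∀ i : Fin n, G.neighborFinset (Sum.inl (), i) =
      ((univ.filter fun j => j ≠ missing i) ×ˢ (univ : Finset (Fin n))).image
        (fun p => (Sum.inr p.1, p.2)) := by
    intro i
    ext w
    obtain ⟨w1, w2⟩ := w
    simp only [mem_neighborFinset, mem_image, mem_product, mem_filter, mem_univ, true_and,
      and_true]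
    constructor
    · intro h
      have hb : (completeBipartiteGraph Unit (Fin r)).Adj (Sum.inl ()) w1 := hle h
      rcases hb with ⟨_, hw⟩ | ⟨hw, _⟩
      · obtain ⟨j, rfl⟩ := Sum.isRight_iff.mp hw
        exact ⟨(j, w2), fun hje => h1 i w2 (hje ▸ h), rfl⟩
      · simp at hw
    · rintro ⟨⟨j, k⟩, hjne, heq⟩
      obtain ⟨rfl, rfl⟩ := Prod.mk.injEq .. ▸ heq
      exact h2 i j hjne k
  have hCdeg : ∀ i : Fin n, G.degree (Sum.inl (), i) = (r - 1) * n := by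
    intro i
    rw [← card_neighborFinset_eq_degree, hC i, card_image_of_injective _ hinjC, card_product,
      filter_ne', card_erase_of_mem (mem_univ _), card_univ, card_univ, Fintype.card_fin,
      Fintype.card_fin]
  have hL : ∀ (j : Fin r) (k : Fin n), G.neighborFinset (Sum.inr j, k) =
      (univ.filter fun i => missing i ≠ j).image
        (fun i => ((Sum.inl (), i) : (Unit ⊕ Fin r) × Fin n)) := by
    intro j k
    ext w
    obtain ⟨w1, w2⟩ := w
    simp only [mem_neighborFinset, mem_image, mem_filter, mem_univ, true_and]
    constructor
    · intro h
      have hb : (completeBipartiteGraph Unit (Fin r)).Adj (Sum.inr j) w1 := hle h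
      rcases hb with ⟨hw, _⟩ | ⟨_, hw⟩
      · simp at hw
      · obtain ⟨u, rfl⟩ := Sum.isLeft_iff.mp hw
        refine ⟨w2, fun hm => h1 w2 k ?_, rfl⟩
        rw [hm]
        exact h.symm
    · rintro ⟨i, hi, heq⟩
      obtain ⟨rfl, rfl⟩ := Prod.mk.injEq .. ▸ heq
      exact (h2 i j (Ne.symm hi) k).symm
  have hLdeg : ∀ (j : Fin r) (k : Fin n),
      G.degree (Sum.inr j, k) = (univ.filter fun i => missing i ≠ j).card := by
    intro j k
    rw [← card_neighborFinset_eq_degree, hL j k, card_image_of_injective _ hinjL]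
  have hsum : ∑ v : (Unit ⊕ Fin r) × Fin n, G.degree v = 2 * ((r - 1) * n ^ 2) := by
    rw [Fintype.sum_prod_type, Fintype.sum_sum_type]
    have e1 : ∑ u : Unit, ∑ k : Fin n, G.degree (Sum.inl u, k) = n * ((r - 1) * n) := by
      rw [Fintype.sum_unique]
      rw [Finset.sum_congr rfl fun k _ => hCdeg k, Finset.sum_const, card_univ,
        Fintype.card_fin, smul_eq_mul]
    have e2 : ∑ j : Fin r, ∑ k : Fin n, G.degree (Sum.inr j, k) = n * ((r - 1) * n) := by
      have step : ∑ j : Fin r, (univ.filter fun i => missing i ≠ j).card = n * (r - 1) := by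
        calc ∑ j : Fin r, (univ.filter fun i => missing i ≠ j).card
            = ∑ j : Fin r, ∑ i : Fin n, if missing i ≠ j then 1 else 0 := by
              exact Finset.sum_congr rfl fun j _ => Finset.card_filter _ _
          _ = ∑ i : Fin n, ∑ j : Fin r, if missing i ≠ j then 1 else 0 := Finset.sum_comm
          _ = ∑ i : Fin n, (univ.filter fun j => missing i ≠ j).card := by
              exact Finset.sum_congr rfl fun i _ => (Finset.card_filter _ _).symm
          _ = ∑ i : Fin n, (r - 1) := by
              refine Finset.sum_congr rfl fun i _ => ?_
              have he : (univ.filter fun j => missing i ≠ j) = univ.erase (missing i) := by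
                ext j
                simp [eq_comm, ne_comm]
              rw [he, card_erase_of_mem (mem_univ _), card_univ, Fintype.card_fin]
          _ = n * (r - 1) := by simp [mul_comm]
      calc ∑ j : Fin r, ∑ k : Fin n, G.degree (Sum.inr j, k)
          = ∑ j : Fin r, n * (univ.filter fun i => missing i ≠ j).card := by
            refine Finset.sum_congr rfl fun j _ => ?_
            rw [Finset.sum_congr rfl fun k _ => hLdeg j k, Finset.sum_const, card_univ,
              Fintype.card_fin, smul_eq_mul]
        _ = n * ∑ j : Fin r, (univ.filter fun i => missing i ≠ j).card := by
            rw [Finset.mul_sum]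
        _ = n * (n * (r - 1)) := by rw [step]
        _ = n * ((r - 1) * n) := by ring
    rw [e1, e2]
    ring
  have hhs := G.sum_degrees_eq_twice_card_edges
  rw [hsum] at hhs
  have hcard : G.edgeFinset.card = (r - 1) * n ^ 2 := by omega
  rw [Set.ncard_eq_toFinset_card']
  calc G.edgeSet.toFinset.card = G.edgeFinset.card := by
        simp [edgeFinset]
    _ = (r - 1) * n ^ 2 := hcard
end

section
/- If H is a graph with at least two edges, no isolated vertices, and H is not 2-connected, then satp(H, H[n]) ≥ n² for all n; that is, every (H, H[n])-partite-saturated graph has at least n² edges. -/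
open SimpleGraph

/-- A graph is `2`-connected if it has at least `3` vertices and removing any single
vertex leaves it connected. -/
def TwoConnected {V : Type*} [Fintype V] (H : SimpleGraph V) : Prop :=
  3 ≤ Fintype.card V ∧ ∀ v : V, (H.induce {u : V | u ≠ v}).Connected


set_option linter.unusedSectionVars false
section Aux
variable {V : Type*} [Fintype V] {n : ℕ} {H : SimpleGraph V} {G : SimpleGraph (V × Fin n)}

private lemma copy_extract (hG : PartiteSaturated H G) {a b : V} (hab : H.Adj a b)
    {i j : Fin n} (hnadj : ¬ G.Adj (a, i) (b, j)) :
    ∃ f : V → Fin n, f a = i ∧ f b = j ∧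
      ∀ ⦃u v : V⦄, H.Adj u v → s(u, v) ≠ s(a, b) → G.Adj (u, f u) (v, f v) := by
  have hba : (blowup H n).Adj (a,i) (b,j) := hab
  obtain ⟨f, hf⟩ := hG.2.2 hba hnadj
  have key : ∀ ⦃u v : V⦄, H.Adj u v →
      G.Adj (u, f u) (v, f v) ∨ s((u, f u), (v, f v)) = s((a,i),(b,j)) := by
    intro u v huv
    rcases hf huv with h | h
    · exact Or.inl h
    · rw [SimpleGraph.fromEdgeSet_adj] at h
      exact Or.inr (by simpa using h.1)
  have huse : ∃ u v, H.Adj u v ∧ s((u, f u), (v, f v)) = s((a,i),(b,j)) := by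
    by_contra hc
    push_neg at hc
    exact hG.2.1 ⟨f, fun u v huv => (key huv).resolve_right (hc u v huv)⟩
  have last : ∀ ⦃u v : V⦄, H.Adj u v → s(u, v) ≠ s(a, b) → G.Adj (u, f u) (v, f v) := by
    intro u v huv hne
    refine (key huv).resolve_right (fun h => hne ?_)
    have := congrArg (Sym2.map Prod.fst) h
    simpa using this
  obtain ⟨u, v, huv, heq⟩ := huse
  rw [Sym2.eq_iff] at heq
  rcases heq with ⟨h1, h2⟩ | ⟨h1, h2⟩
  · obtain ⟨rfl, hfu⟩ : u = a ∧ f u = i := ⟨congrArg Prod.fst h1, congrArg Prod.snd h1⟩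
    obtain ⟨rfl, hfv⟩ : v = b ∧ f v = j := ⟨congrArg Prod.fst h2, congrArg Prod.snd h2⟩
    exact ⟨f, hfu, hfv, last⟩
  · obtain ⟨rfl, hfu⟩ : u = b ∧ f u = j := ⟨congrArg Prod.fst h1, congrArg Prod.snd h1⟩
    obtain ⟨rfl, hfv⟩ : v = a ∧ f v = i := ⟨congrArg Prod.fst h2, congrArg Prod.snd h2⟩
    exact ⟨f, hfv, hfu, last⟩

private lemma edges_between (hab : (a : V) ≠ b)
    (hall : ∀ i j : Fin n, G.Adj (a, i) (b, j)) : n ^ 2 ≤ G.edgeSet.ncard := by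
  classical
  set S : Finset (Sym2 (V × Fin n)) :=
    (Finset.univ : Finset (Fin n × Fin n)).image (fun p => s((a, p.1), (b, p.2))) with hS
  have hinj : Set.InjOn (fun p : Fin n × Fin n => s((a, p.1), (b, p.2))) ↑(Finset.univ : Finset (Fin n × Fin n)) := by
    intro p _ q _ h
    rw [Sym2.eq_iff] at h
    rcases h with ⟨h1, h2⟩ | ⟨h1, h2⟩
    · simp only [Prod.mk.injEq] at h1 h2
      exact Prod.ext_iff.2 ⟨h1.2, h2.2⟩
    · simp only [Prod.mk.injEq] at h1
      exact absurd h1.1 hab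
  have hcard : S.card = n ^ 2 := by
    rw [hS, Finset.card_image_of_injOn hinj, Finset.card_univ]
    simp [sq]
  have hsub : (S : Set (Sym2 (V × Fin n))) ⊆ G.edgeSet := by
    intro e he
    simp only [hS, Finset.coe_image, Set.mem_image] at he
    obtain ⟨p, _, rfl⟩ := he
    exact (hall p.1 p.2)
  calc n ^ 2 = (S : Set (Sym2 (V × Fin n))).ncard := by rw [Set.ncard_coe_finset, hcard]
    _ ≤ G.edgeSet.ncard := Set.ncard_le_ncard hsub (Set.toFinite _)

private lemma case_partition (hG : PartiteSaturated H G) (A : Set V)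
    (hA : A.Nonempty) (hB : Aᶜ.Nonempty)
    (hclosed : ∀ ⦃u v : V⦄, H.Adj u v → u ∈ A → v ∈ A)
    (hiso : ∀ v : V, ∃ u, H.Adj v u) : n ^ 2 ≤ G.edgeSet.ncard := by
  classical
  by_contra hcon
  push_neg at hcon
  obtain ⟨a, ha⟩ := hA
  obtain ⟨a', haa'⟩ := hiso a
  have ha' : a' ∈ A := hclosed haa' ha
  obtain ⟨b, hb⟩ := hB
  obtain ⟨b', hbb'⟩ := hiso b
  have hb' : b' ∈ Aᶜ := fun h => hb (hclosed hbb'.symm h)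
  have hmissA : ∃ i j : Fin n, ¬ G.Adj (a, i) (a', j) := by
    by_contra h; push_neg at h
    exact absurd (edges_between haa'.ne h) (not_le.2 hcon)
  have hmissB : ∃ i j : Fin n, ¬ G.Adj (b, i) (b', j) := by
    by_contra h; push_neg at h
    exact absurd (edges_between hbb'.ne h) (not_le.2 hcon)
  obtain ⟨i, j, hij⟩ := hmissA
  obtain ⟨i', j', hij'⟩ := hmissB
  obtain ⟨f₁, _, _, hf₁⟩ := copy_extract hG haa' hij
  obtain ⟨f₂, _, _, hf₂⟩ := copy_extract hG hbb' hij'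
  refine hG.2.1 ⟨fun v => if v ∈ A then f₂ v else f₁ v, ?_⟩
  intro u v huv
  by_cases hu : u ∈ A
  · have hv : v ∈ A := hclosed huv hu
    simp only [if_pos hu, if_pos hv]
    refine hf₂ huv (fun h => ?_)
    have : b = u ∨ b = v := by
      rw [Sym2.eq_iff] at h
      rcases h with ⟨h1, _⟩ | ⟨_, h2⟩
      · exact Or.inl h1.symm
      · exact Or.inr h2.symm
    rcases this with rfl | rfl
    · exact hb hu
    · exact hb hv
  · have hv : v ∉ A := fun h => hu (hclosed huv.symm h)
    simp only [if_neg hu, if_neg hv]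
    refine hf₁ huv (fun h => ?_)
    have : a = u ∨ a = v := by
      rw [Sym2.eq_iff] at h
      rcases h with ⟨h1, _⟩ | ⟨_, h2⟩
      · exact Or.inl h1.symm
      · exact Or.inr h2.symm
    rcases this with rfl | rfl
    · exact hu ha
    · exact hv ha

private lemma case_cut (hG : PartiteSaturated H G) (w : V) (A : Set V) (hwA : w ∉ A)
    (hclosed : ∀ ⦃u v : V⦄, H.Adj u v → u ∈ A → v ≠ w → v ∈ A)
    {zA zB : V} (hzA : zA ∈ A) (hzB : zB ∉ A) (hzBw : zB ≠ w)
    (hAw : H.Adj zA w) (hBw : H.Adj zB w) : n ^ 2 ≤ G.edgeSet.ncard := by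
  classical
  set Agood : Fin n → Prop := fun k => ∃ h : V → Fin n, h w = k ∧
    ∀ ⦃u v : V⦄, H.Adj u v → (u ∈ A ∨ u = w) → (v ∈ A ∨ v = w) →
      G.Adj (u, h u) (v, h v) with hAgoodDef
  set Bgood : Fin n → Prop := fun k => ∃ h : V → Fin n, h w = k ∧
    ∀ ⦃u v : V⦄, H.Adj u v → u ∉ A → v ∉ A → G.Adj (u, h u) (v, h v) with hBgoodDef
  have hdisj : ∀ k, ¬ (Agood k ∧ Bgood k) := by
    rintro k ⟨⟨h, hhw, hh⟩, ⟨g, hgw, hg⟩⟩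
    set F : V → Fin n := fun v => if v ∈ A ∨ v = w then h v else g v with hFdef
    have hFh : ∀ v, (v ∈ A ∨ v = w) → F v = h v := fun v hv => if_pos hv
    have hFg : ∀ v, ¬(v ∈ A ∨ v = w) → F v = g v := fun v hv => if_neg hv
    refine hG.2.1 ⟨F, ?_⟩
    intro u v huv
    by_cases hu : u ∈ A ∨ u = w
    · by_cases hv : v ∈ A ∨ v = w
      · rw [hFh u hu, hFh v hv]; exact hh huv hu hv
      · push_neg at hv
        have hu' : u = w := by
          rcases hu with hu0 | hu0
          · exact absurd (hclosed huv hu0 hv.2) hv.1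
          · exact hu0
        rw [hFh u hu, hFg v (not_or.mpr hv), hu', hhw, ← hgw]
        exact hg (hu' ▸ huv) hwA hv.1
    · push_neg at hu
      by_cases hv : v ∈ A ∨ v = w
      · have hv' : v = w := by
          rcases hv with hv0 | hv0
          · exact absurd (hclosed huv.symm hv0 hu.2) hu.1
          · exact hv0
        rw [hFg u (not_or.mpr hu), hFh v hv, hv', hhw, ← hgw]
        exact hg (hv' ▸ huv) hu.1 hwA
      · push_neg at hv
        rw [hFg u (not_or.mpr hu), hFg v (not_or.mpr hv)]
        exact hg huv hu.1 hv.1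
  have hTA : ∀ (i k : Fin n), ¬ Bgood k → G.Adj (zA, i) (w, k) := by
    intro i k hk
    by_contra hnadj
    obtain ⟨f, hfa, hfw, hf⟩ := copy_extract hG hAw hnadj
    refine hk ⟨f, hfw, ?_⟩
    intro u v huv hu hv
    refine hf huv (fun hs => ?_)
    rw [Sym2.eq_iff] at hs
    rcases hs with ⟨h1, _⟩ | ⟨h1, h2⟩
    · exact hu (by rw [h1]; exact hzA)
    · exact hv (by rw [h2]; exact hzA)
  have hTB : ∀ (i k : Fin n), ¬ Agood k → G.Adj (zB, i) (w, k) := by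
    intro i k hk
    by_contra hnadj
    obtain ⟨f, hfa, hfw, hf⟩ := copy_extract hG hBw hnadj
    refine hk ⟨f, hfw, ?_⟩
    intro u v huv hu hv
    refine hf huv (fun hs => ?_)
    rw [Sym2.eq_iff] at hs
    rcases hs with ⟨h1, _⟩ | ⟨h1, h2⟩
    · rw [h1] at hu
      rcases hu with hu0 | hu0
      · exact hzB hu0
      · exact hzBw hu0
    · rw [h2] at hv
      rcases hv with hv0 | hv0
      · exact hzB hv0
      · exact hzBw hv0
  set SA : Finset (Fin n) := Finset.univ.filter Agood with hSAdef
  set SB : Finset (Fin n) := Finset.univ.filter Bgood with hSBdef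
  have hcards : SA.card + SB.card ≤ n := by
    have hdis : Disjoint SA SB := by
      rw [Finset.disjoint_left]
      intro k hkA hkB
      exact hdisj k ⟨(Finset.mem_filter.1 hkA).2, (Finset.mem_filter.1 hkB).2⟩
    calc SA.card + SB.card = (SA ∪ SB).card := (Finset.card_union_of_disjoint hdis).symm
      _ ≤ Fintype.card (Fin n) := Finset.card_le_univ _
      _ = n := Fintype.card_fin n
  have hSAle : SA.card ≤ n := le_trans (Nat.le_add_right _ _) hcards
  have hSBle : SB.card ≤ n := le_trans (Nat.le_add_left _ _) hcards
  set T1 : Finset (Sym2 (V × Fin n)) :=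
    ((Finset.univ : Finset (Fin n)) ×ˢ SBᶜ).image (fun p => s((zA, p.1), (w, p.2))) with hT1
  set T2 : Finset (Sym2 (V × Fin n)) :=
    ((Finset.univ : Finset (Fin n)) ×ˢ SAᶜ).image (fun p => s((zB, p.1), (w, p.2))) with hT2
  have hinj : ∀ (z : V), z ≠ w → ∀ (t : Finset (Fin n)), Set.InjOn
      (fun p : Fin n × Fin n => s((z, p.1), (w, p.2)))
      ↑((Finset.univ : Finset (Fin n)) ×ˢ t) := by
    intro z hz t p _ q _ hpq
    rw [Sym2.eq_iff] at hpq
    rcases hpq with ⟨h1, h2⟩ | ⟨h1, h2⟩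
    · simp only [Prod.mk.injEq] at h1 h2
      exact Prod.ext_iff.2 ⟨h1.2, h2.2⟩
    · simp only [Prod.mk.injEq] at h1
      exact absurd h1.1 hz
  have hzAw : zA ≠ w := fun h => hwA (h ▸ hzA)
  have hT1card : T1.card = n * (n - SB.card) := by
    rw [hT1, Finset.card_image_of_injOn (hinj zA hzAw SBᶜ), Finset.card_product,
      Finset.card_univ, Fintype.card_fin, Finset.card_compl, Fintype.card_fin]
  have hT2card : T2.card = n * (n - SA.card) := by
    rw [hT2, Finset.card_image_of_injOn (hinj zB hzBw SAᶜ), Finset.card_product,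
      Finset.card_univ, Fintype.card_fin, Finset.card_compl, Fintype.card_fin]
  have hdisT : Disjoint T1 T2 := by
    rw [Finset.disjoint_left]
    intro e he1 he2
    rw [hT1, Finset.mem_image] at he1
    rw [hT2, Finset.mem_image] at he2
    obtain ⟨p, _, rfl⟩ := he1
    obtain ⟨q, _, hq⟩ := he2
    rw [Sym2.eq_iff] at hq
    rcases hq with ⟨h1, _⟩ | ⟨h1, h2⟩
    · simp only [Prod.mk.injEq] at h1
      exact hzB (by rw [h1.1]; exact hzA)
    · simp only [Prod.mk.injEq] at h1
      exact hzBw h1.1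
  have hsub : ↑(T1 ∪ T2) ⊆ G.edgeSet := by
    intro e he
    rw [Finset.coe_union, Set.mem_union] at he
    rcases he with he | he
    · rw [hT1, Finset.coe_image, Set.mem_image] at he
      obtain ⟨p, hp, rfl⟩ := he
      rw [Finset.mem_coe, Finset.mem_product, Finset.mem_compl, hSBdef, Finset.mem_filter] at hp
      exact hTA p.1 p.2 (fun hb => hp.2 ⟨Finset.mem_univ _, hb⟩)
    · rw [hT2, Finset.coe_image, Set.mem_image] at he
      obtain ⟨p, hp, rfl⟩ := he
      rw [Finset.mem_coe, Finset.mem_product, Finset.mem_compl, hSAdef, Finset.mem_filter] at hp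
      exact hTB p.1 p.2 (fun hb => hp.2 ⟨Finset.mem_univ _, hb⟩)
  calc n ^ 2 = n * n := pow_two n
    _ ≤ n * ((n - SB.card) + (n - SA.card)) :=
        Nat.mul_le_mul le_rfl (by omega)
    _ = n * (n - SB.card) + n * (n - SA.card) := Nat.mul_add n _ _
    _ = T1.card + T2.card := by rw [hT1card, hT2card]
    _ = (T1 ∪ T2).card := (Finset.card_union_of_disjoint hdisT).symm
    _ = (↑(T1 ∪ T2) : Set (Sym2 (V × Fin n))).ncard := (Set.ncard_coe_finset _).symm
    _ ≤ G.edgeSet.ncard := Set.ncard_le_ncard hsub (Set.toFinite _)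

private lemma three_le_card (he : 2 ≤ H.edgeSet.ncard) : 3 ≤ Fintype.card V := by
  classical
  obtain ⟨a, b, hab⟩ : ∃ a b, H.Adj a b := by
    obtain ⟨e, heS⟩ := Set.nonempty_of_ncard_ne_zero (s := H.edgeSet) (by omega)
    revert heS
    refine Sym2.ind (fun a b h => ⟨a, b, H.mem_edgeSet.mp h⟩) e
  by_contra h
  push_neg at h
  have hsub : H.edgeSet ⊆ {s(a, b)} := by
    intro e heS
    revert heS
    refine Sym2.ind (fun u v h' => ?_) e
    have huv : H.Adj u v := H.mem_edgeSet.mp h'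
    have huniv : ({u, v} : Finset V) = Finset.univ := by
      apply Finset.eq_univ_of_card
      have h2 : ({u, v} : Finset V).card = 2 := by
        rw [Finset.card_insert_of_notMem (by simp [huv.ne]), Finset.card_singleton]
      have hle : 2 ≤ Fintype.card V := by
        rw [← h2, ← Finset.card_univ]
        exact Finset.card_le_card (Finset.subset_univ _)
      omega
    have ha : a ∈ ({u, v} : Finset V) := huniv ▸ Finset.mem_univ a
    have hb : b ∈ ({u, v} : Finset V) := huniv ▸ Finset.mem_univ b
    simp only [Finset.mem_insert, Finset.mem_singleton] at ha hb
    simp only [Set.mem_singleton_iff, Sym2.eq_iff]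
    rcases ha with rfl | rfl
    · rcases hb with rfl | rfl
      · exact absurd rfl hab.ne
      · exact Or.inl ⟨rfl, rfl⟩
    · rcases hb with rfl | rfl
      · exact Or.inr ⟨rfl, rfl⟩
      · exact absurd rfl hab.ne
  have : H.edgeSet.ncard ≤ 1 := by
    calc H.edgeSet.ncard ≤ ({s(a,b)} : Set (Sym2 V)).ncard :=
        Set.ncard_le_ncard hsub (Set.finite_singleton _)
      _ = 1 := Set.ncard_singleton _
  omega

end Aux

/-- If `H` has at least two edges, no isolated vertices, and is not `2`-connected, then
every `(H,H[n])`-partite-saturated graph has at least `n²` edges. -/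
theorem stmt_10 {V : Type*} [Fintype V] (H : SimpleGraph V)
    (he : 2 ≤ H.edgeSet.ncard) (hiso : ∀ v : V, ∃ u, H.Adj v u)
    (h2c : ¬ TwoConnected H) (n : ℕ)
    (G : SimpleGraph (V × Fin n)) (hG : PartiteSaturated H G) :
    n ^ 2 ≤ G.edgeSet.ncard := by
  classical
  have hcard3 : 3 ≤ Fintype.card V := three_le_card he
  rw [TwoConnected] at h2c
  push_neg at h2c
  obtain ⟨w, hw⟩ := h2c hcard3
  have hne : ∃ u : V, u ≠ w := by
    obtain ⟨u, v, huv⟩ := Fintype.exists_pair_of_one_lt_card (α := V) (by omega)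
    by_cases hu : u = w
    · exact ⟨v, fun hv => huv (by rw [hu, hv])⟩
    · exact ⟨u, hu⟩
  obtain ⟨u₀, hu₀⟩ := hne
  have hnp : ¬ (H.induce {u : V | u ≠ w}).Preconnected :=
    fun hp => hw ((SimpleGraph.connected_iff _).mpr ⟨hp, ⟨⟨u₀, hu₀⟩⟩⟩)
  obtain ⟨x, y, hxy⟩ : ∃ x y : {u : V | u ≠ w},
      ¬ (H.induce {u : V | u ≠ w}).Reachable x y := by
    by_contra hc
    push_neg at hc
    exact hnp hc
  set A : Set V := {v | ∃ hv : v ≠ w, (H.induce {u : V | u ≠ w}).Reachable x ⟨v, hv⟩}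
    with hAdef
  have hxA : (x : V) ∈ A := ⟨x.2, Reachable.refl x⟩
  have hwA : w ∉ A := fun h => h.1 rfl
  have hyA : (y : V) ∉ A := fun h => hxy h.2
  have hclosedA : ∀ ⦃u v : V⦄, H.Adj u v → u ∈ A → v ≠ w → v ∈ A := by
    rintro u v huv ⟨hu, hr⟩ hv
    have hadj : (H.induce {u : V | u ≠ w}).Adj ⟨u, hu⟩ ⟨v, hv⟩ := by
      simp only [SimpleGraph.comap_adj, Function.Embedding.coe_subtype]
      exact huv
    exact ⟨hv, hr.trans hadj.reachable⟩
  by_cases hEA : ∃ z, z ∈ A ∧ H.Adj w z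
  · by_cases hEB : ∃ z, z ∉ A ∧ z ≠ w ∧ H.Adj w z
    · obtain ⟨zA, hzA, hAw⟩ := hEA
      obtain ⟨zB, hzB, hzBw, hBw⟩ := hEB
      exact case_cut hG w A hwA hclosedA hzA hzB hzBw hAw.symm hBw.symm
    · -- B := {v | v ∉ A ∧ v ≠ w} closed
      refine case_partition hG {v | v ∉ A ∧ v ≠ w} ⟨y, ⟨hyA, y.2⟩⟩
        ⟨w, fun h => h.2 rfl⟩ ?_ hiso
      rintro u v huv ⟨huA, huw⟩
      have hvw : v ≠ w := by
        rintro rfl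
        exact hEB ⟨u, huA, huw, huv.symm⟩
      refine ⟨fun hvA => huA (hclosedA huv.symm hvA huw), hvw⟩
  · refine case_partition hG A ⟨x, hxA⟩ ⟨w, hwA⟩ ?_ hiso
    intro u v huv huA
    have hvw : v ≠ w := by
      rintro rfl
      exact hEA ⟨u, huA, huv.symm⟩
    exact hclosedA huv huA hvw
end

section
/- If H is a 2-connected graph with at least two edges, then for all n ≥ e(H) there exists an (H, H[n])-partite-saturated subgraph of H[n] with at most 2·e(H)²·n − e(H)³ edges; in particular satp(H, H[n]) = O(n). -/
/-!
Give every edge `ε` of `H` its own index `ℓ ε`. In the template graph, layer `ℓ ε` spans the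
blow-up of `H` minus the endpoints of `ε`, and the non-special vertices (indices outside the
range of `ℓ`) in the two parts of `ε` are joined to layer `ℓ ε`; so adding any edge of `H[n]`
between two non-special vertices completes a partite copy of `H`. The template has no partite
copy, since a vertex of a copy in layer `ℓ ε` never lies on `ε`. A copy on special indices only
stays in one layer along edges, hence in a single layer `ℓ ε` everywhere, including at the
endpoints of `ε`. A copy through a non-special vertex `a` puts a neighbour `y` in a layer `ℓ ε`
with `ε = az`; connectivity of `H - a` carries that layer from `y` to `z`. Extending the
template to a maximal copy-free graph inside the stripe of edges meeting a special index
saturates every remaining edge, and the stripe has `e(H) (n² - (n - e(H))²)` edges.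
-/

open SimpleGraph

open Function

section

variable {V β : Type*}

theorem SimpleGraph.Reachable.induction_on {G : SimpleGraph V} {P : V → Prop} {u v : V}
    (h : G.Reachable u v) (hu : P u) (step : ∀ ⦃a b⦄, G.Adj a b → P a → P b) : P v := by
  obtain ⟨w⟩ := h
  induction w with
  | nil => exact hu
  | cons hadj _ ih => exact ih (step hadj hu)

theorem SimpleGraph.exists_maximal_between {W : Type*} [Finite W] {P : SimpleGraph W → Prop}
    {A B : SimpleGraph W} (hA : P A) (hAB : A ≤ B) :
    ∃ G, A ≤ G ∧ G ≤ B ∧ P G ∧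
      ∀ ⦃x y⦄, B.Adj x y → ¬ G.Adj x y → ¬ P (G ⊔ fromEdgeSet {s(x, y)}) := by
  obtain ⟨G, hAG, hmax⟩ :=
    (Set.toFinite {G : SimpleGraph W | G ≤ B ∧ P G}).exists_le_maximal ⟨hAB, hA⟩
  refine ⟨G, hAG, hmax.prop.1, hmax.prop.2, fun x y hxy hGxy hP => hGxy ?_⟩
  exact hmax.le_of_ge ⟨sup_le hmax.prop.1 ((edge_le_iff B).mpr (Or.inr hxy)), hP⟩ le_sup_left
    (Or.inr ⟨rfl, hxy.ne⟩)

theorem TwoConnected.connected [Fintype V] {H : SimpleGraph V} (h : TwoConnected H) :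
    H.Connected := by
  classical
  have : Nonempty V := Fintype.card_pos_iff.mp (by have := h.1; omega)
  refine ⟨fun x y => ?_⟩
  obtain ⟨v, hv⟩ : ∃ v, v ∉ ({x, y} : Finset V) := by
    by_contra! hall
    have := Finset.card_le_card (fun v _ => hall v : Finset.univ ⊆ {x, y})
    have := h.1
    have := Finset.card_le_two (a := x) (b := y)
    rw [Finset.card_univ] at *
    omega
  simp only [Finset.mem_insert, Finset.mem_singleton, not_or] at hv
  exact ((h.2 v).preconnected ⟨x, Ne.symm hv.1⟩ ⟨y, Ne.symm hv.2⟩).map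
    (Embedding.induce _).toHom

theorem IsPartiteCopy.mono {n : ℕ} {H : SimpleGraph V} {G G' : SimpleGraph (V × Fin n)}
    {f : V → Fin n} (hf : IsPartiteCopy H G f) (hle : G ≤ G') : IsPartiteCopy H G' f :=
  fun _ _ huv => hle (hf huv)

def blowupTemplate (H : SimpleGraph V) (ℓ : H.edgeSet → β) : SimpleGraph (V × β) where
  Adj p q := H.Adj p.1 q.1 ∧ ∃ ε : H.edgeSet,
    (p.2 = ℓ ε ∧ q.2 = ℓ ε ∧ p.1 ∉ (ε : Sym2 V) ∧ q.1 ∉ (ε : Sym2 V)) ∨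
    (p.1 ∈ (ε : Sym2 V) ∧ q.1 ∉ (ε : Sym2 V) ∧ p.2 ∉ Set.range ℓ ∧ q.2 = ℓ ε) ∨
    (q.1 ∈ (ε : Sym2 V) ∧ p.1 ∉ (ε : Sym2 V) ∧ q.2 ∉ Set.range ℓ ∧ p.2 = ℓ ε)
  symm := ⟨fun _ _ ⟨hH, ε, h⟩ => ⟨hH.symm, ε, by tauto⟩⟩
  loopless := ⟨fun p h => H.loopless.irrefl p.1 h.1⟩

def blowupStripe (H : SimpleGraph V) (S : Set β) : SimpleGraph (V × β) where
  Adj p q := H.Adj p.1 q.1 ∧ (p.2 ∈ S ∨ q.2 ∈ S)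
  symm := ⟨fun _ _ h => ⟨h.1.symm, h.2.symm⟩⟩
  loopless := ⟨fun p h => H.loopless.irrefl p.1 h.1⟩

section Template

variable {H : SimpleGraph V} {ℓ : H.edgeSet → β}

theorem blowupTemplate_le_blowupStripe : blowupTemplate H ℓ ≤ blowupStripe H (Set.range ℓ) := by
  rintro p q ⟨hH, ε, h | h | h⟩
  · exact ⟨hH, Or.inl ⟨ε, h.1.symm⟩⟩
  · exact ⟨hH, Or.inr ⟨ε, h.2.2.2.symm⟩⟩
  · exact ⟨hH, Or.inl ⟨ε, h.2.2.2.symm⟩⟩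

theorem blowupTemplate_adj_of_not_mem_range {p q : V × β} (h : (blowupTemplate H ℓ).Adj p q)
    (hp : p.2 ∉ Set.range ℓ) : ∃ ε, q.2 = ℓ ε ∧ p.1 ∈ (ε : Sym2 V) ∧ q.1 ∉ (ε : Sym2 V) := by
  obtain ⟨-, ε, h | h | h⟩ := h
  · exact absurd ⟨ε, h.1.symm⟩ hp
  · exact ⟨ε, h.2.2.2, h.1, h.2.1⟩
  · exact absurd ⟨ε, h.2.2.2.symm⟩ hp

theorem blowupTemplate_adj_of_eq (hℓ : Injective ℓ) {p q : V × β} {ε δ : H.edgeSet}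
    (h : (blowupTemplate H ℓ).Adj p q) (hp : p.2 = ℓ ε) (hq : q.2 = ℓ δ) :
    δ = ε ∧ p.1 ∉ (ε : Sym2 V) ∧ q.1 ∉ (ε : Sym2 V) := by
  obtain ⟨-, ε', h | h | h⟩ := h
  · obtain rfl := hℓ (hp.symm.trans h.1)
    exact ⟨hℓ (hq.symm.trans h.2.1), h.2.2⟩
  · exact absurd ⟨ε, hp.symm⟩ h.2.2.1
  · exact absurd ⟨δ, hq.symm⟩ h.2.2.1

theorem blowupTemplate_adj_not_mem (hℓ : Injective ℓ) {p q : V × β} {ε : H.edgeSet}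
    (h : (blowupTemplate H ℓ).Adj p q) (hp : p.2 = ℓ ε) : p.1 ∉ (ε : Sym2 V) := by
  by_cases hq : q.2 ∈ Set.range ℓ
  · obtain ⟨δ, hδ⟩ := hq
    exact (blowupTemplate_adj_of_eq hℓ h hp hδ.symm).2.1
  · obtain ⟨δ, hpδ, -, hδ⟩ := blowupTemplate_adj_of_not_mem_range h.symm hq
    rwa [hℓ (hp.symm.trans hpδ)]

theorem blowupTemplate_adj_of_ne {ε : H.edgeSet} {f : V → β}
    (hin : ∀ w ∈ (ε : Sym2 V), f w ∉ Set.range ℓ) (hout : ∀ w ∉ (ε : Sym2 V), f w = ℓ ε)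
    {a b : V} (hab : H.Adj a b) (hne : (ε : Sym2 V) ≠ s(a, b)) :
    (blowupTemplate H ℓ).Adj (a, f a) (b, f b) := by
  refine ⟨hab, ε, ?_⟩
  by_cases ha : a ∈ (ε : Sym2 V) <;> by_cases hb : b ∈ (ε : Sym2 V)
  · exact absurd ((Sym2.mem_and_mem_iff hab.ne).mp ⟨ha, hb⟩) hne
  · exact Or.inr (Or.inl ⟨ha, hb, hin a ha, hout b hb⟩)
  · exact Or.inr (Or.inr ⟨hb, ha, hin b hb, hout a ha⟩)
  · exact Or.inl ⟨hout a ha, hout b hb, ha, hb⟩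

end Template

section PartiteCopy

variable {n : ℕ} {H : SimpleGraph V} {ℓ : H.edgeSet → Fin n} {f : V → Fin n}

theorem exists_isPartiteCopy_blowupTemplate_sup_edge {u v : V} {i j : Fin n}
    (huv : H.Adj u v) (hi : i ∉ Set.range ℓ) (hj : j ∉ Set.range ℓ) :
    ∃ f, IsPartiteCopy H (blowupTemplate H ℓ ⊔ fromEdgeSet {s((u, i), (v, j))}) f := by
  classical
  let ε : H.edgeSet := ⟨s(u, v), huv⟩
  let f : V → Fin n := fun w => if w = u then i else if w = v then j else ℓ ε
  refine ⟨f, fun a b hab => ?_⟩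
  by_cases hne : (ε : Sym2 V) = s(a, b)
  · refine Or.inr ⟨?_, fun h => hab.ne (congrArg Prod.fst h)⟩
    rcases Sym2.eq_iff.mp hne with ⟨rfl, rfl⟩ | ⟨rfl, rfl⟩
    · simp [f, huv.ne']
    · simp [f, huv.ne', Sym2.eq_swap]
  · refine Or.inl (blowupTemplate_adj_of_ne (f := f) (fun w hw => ?_) (fun w hw => ?_) hab hne)
    · rcases Sym2.mem_iff.mp hw with rfl | rfl <;> simp [f, hi, hj, huv.ne']
    · obtain ⟨hwu, hwv⟩ : w ≠ u ∧ w ≠ v := by simpa [ε, not_or] using hw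
      simp [f, hwu, hwv]

theorem IsPartiteCopy.exists_not_mem_range (hℓ : Injective ℓ) (hconn : H.Connected)
    (hf : IsPartiteCopy H (blowupTemplate H ℓ) f) : ∃ a, f a ∉ Set.range ℓ := by
  by_contra! hall
  choose e he using hall
  obtain ⟨x₀⟩ := hconn.nonempty
  have hconst : ∀ x, e x = e x₀ := fun x =>
    (hconn.preconnected x₀ x).induction_on (P := fun x => e x = e x₀) rfl fun a b hab ha =>
      (blowupTemplate_adj_of_eq hℓ (hf hab) (he a).symm (he b).symm).1.trans ha
  obtain ⟨u, hu⟩ : ∃ u, u ∈ (e x₀ : Sym2 V) := ⟨_, Sym2.out_fst_mem _⟩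
  obtain ⟨v, hv⟩ := Sym2.mem_iff_exists.mp hu
  have huv : H.Adj u v := by rw [← mem_edgeSet, ← hv]; exact (e x₀).2
  exact blowupTemplate_adj_not_mem hℓ (hf huv) (he u).symm (by rwa [hconst u])

theorem IsPartiteCopy.mem_range_of_preconnected_induce (hℓ : Injective ℓ) {a y : V}
    (hdel : (H.induce {u | u ≠ a}).Preconnected) (hay : H.Adj a y)
    (hf : IsPartiteCopy H (blowupTemplate H ℓ) f) : f a ∈ Set.range ℓ := by
  by_contra ha
  obtain ⟨ε, hyε, haε, -⟩ := blowupTemplate_adj_of_not_mem_range (hf hay) ha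
  obtain ⟨z, hεz⟩ := Sym2.mem_iff_exists.mp haε
  have haz : H.Adj a z := by rw [← mem_edgeSet, ← hεz]; exact ε.2
  obtain ⟨δ, hzδ, -, hzδ'⟩ := blowupTemplate_adj_of_not_mem_range (hf haz) ha
  have hlayer : ∀ w : {u | u ≠ a}, f w = ℓ ε := fun w =>
    (hdel ⟨y, hay.ne'⟩ w).induction_on (P := fun w : {u | u ≠ a} => f w = ℓ ε) hyε
      fun b w hbw hb => by
      have hbw : H.Adj b w := hbw
      by_cases hw : f w ∈ Set.range ℓ
      · obtain ⟨ε', hε'⟩ := hw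
        rw [← hε', (blowupTemplate_adj_of_eq hℓ (hf hbw) hb hε'.symm).1]
      · obtain ⟨ε', hbε', hwε', -⟩ := blowupTemplate_adj_of_not_mem_range (hf hbw.symm) hw
        rw [hℓ (hbε'.symm.trans hb), hεz, Sym2.mem_iff] at hwε'
        rcases hwε' with h | h
        · exact absurd h w.2
        · subst h
          exact absurd ⟨δ, hzδ.symm⟩ hw
  rw [hℓ (hzδ.symm.trans (hlayer ⟨z, haz.ne'⟩)), hεz] at hzδ'
  exact hzδ' (Sym2.mem_mk_right a z)

theorem not_isPartiteCopy_blowupTemplate [Fintype V] (h2c : TwoConnected H)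
    (hℓ : Injective ℓ) (f : V → Fin n) : ¬ IsPartiteCopy H (blowupTemplate H ℓ) f := by
  intro hf
  have : Nontrivial V := Fintype.one_lt_card_iff_nontrivial.mp (by have := h2c.1; omega)
  obtain ⟨a, ha⟩ := hf.exists_not_mem_range hℓ h2c.connected
  obtain ⟨y, hay⟩ := h2c.connected.preconnected.exists_adj_of_nontrivial a
  exact ha (hf.mem_range_of_preconnected_induce hℓ (h2c.2 a).preconnected hay)

end PartiteCopy

theorem blowupStripe_le_blowup {n : ℕ} (H : SimpleGraph V) (S : Set (Fin n)) :
    blowupStripe H S ≤ blowup H n :=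
  fun _ _ h => h.1

theorem ncard_edgeSet_blowupStripe [Fintype V] [Fintype β] (H : SimpleGraph V) (S : Set β) :
    (blowupStripe H S).edgeSet.ncard =
      H.edgeSet.ncard * (S.ncard * Fintype.card β + Sᶜ.ncard * S.ncard) := by
  classical
  have hdeg (u : V) (i : β) : (blowupStripe H S).degree (u, i) =
      H.degree u * if i ∈ S then Fintype.card β else S.ncard := by
    rw [← card_neighborFinset_eq_degree, ← card_neighborFinset_eq_degree,
      show (blowupStripe H S).neighborFinset (u, i) =
        H.neighborFinset u ×ˢ (if i ∈ S then Finset.univ else S.toFinset) by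
          ext ⟨v, j⟩; rw [mem_neighborFinset]; split_ifs <;> simp [blowupStripe, *],
      Finset.card_product]
    split_ifs <;> simp [Set.ncard_eq_toFinset_card']
  have hindex : ∑ i : β, (if i ∈ S then Fintype.card β else S.ncard) =
      S.ncard * Fintype.card β + Sᶜ.ncard * S.ncard := by
    rw [Finset.sum_ite, Finset.sum_const, Finset.sum_const, smul_eq_mul, smul_eq_mul,
      Set.filter_mem_univ_eq_toFinset, ← Set.ncard_eq_toFinset_card',
      ← Set.ncard_coe_finset, Finset.coe_filter]
    simp only [Finset.mem_univ, true_and, Set.compl_def]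
  have hsum := sum_degrees_eq_twice_card_edges (blowupStripe H S)
  rw [Fintype.sum_prod_type] at hsum
  simp only [hdeg, ← Finset.mul_sum, ← Finset.sum_mul, hindex,
    sum_degrees_eq_twice_card_edges] at hsum
  rw [← coe_edgeFinset, ← coe_edgeFinset, Set.ncard_coe_finset, Set.ncard_coe_finset]
  linarith

theorem mul_add_sub_mul_eq {k n : ℕ} (hkn : k ≤ n) :
    k * (k * n + (n - k) * k) = 2 * k ^ 2 * n - k ^ 3 := by
  obtain ⟨d, rfl⟩ := Nat.exists_eq_add_of_le hkn
  rw [Nat.add_sub_cancel_left, eq_comm, Nat.sub_eq_iff_eq_add (by nlinarith)]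
  ring

end

theorem stmt_11_general {V : Type*} [Fintype V] (H : SimpleGraph V) (h2c : TwoConnected H)
    (n : ℕ) (hn : H.edgeSet.ncard ≤ n) :
    ∃ G : SimpleGraph (V × Fin n), PartiteSaturated H G ∧
      G.edgeSet.ncard ≤ 2 * H.edgeSet.ncard ^ 2 * n - H.edgeSet.ncard ^ 3 := by
  classical
  obtain ⟨ℓ⟩ : Nonempty (H.edgeSet ↪ Fin n) := Function.Embedding.nonempty_of_card_le <| by
    rwa [Fintype.card_fin, ← Nat.card_eq_fintype_card, Nat.card_coe_set_eq]
  obtain ⟨G, hTG, hGS, hG, hGmax⟩ :=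
    exists_maximal_between (P := fun G => ¬ ∃ f, IsPartiteCopy H G f)
      (not_exists.mpr (not_isPartiteCopy_blowupTemplate h2c ℓ.injective))
    blowupTemplate_le_blowupStripe
  refine ⟨G, ⟨hGS.trans (blowupStripe_le_blowup H _), hG, ?_⟩, ?_⟩
  · rintro ⟨u, i⟩ ⟨v, j⟩ huv hGuv
    by_cases hS : (blowupStripe H (Set.range ℓ)).Adj (u, i) (v, j)
    · exact not_not.mp (hGmax hS hGuv)
    · obtain ⟨f, hf⟩ := exists_isPartiteCopy_blowupTemplate_sup_edge (ℓ := ℓ) (i := i) (j := j)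
        huv (fun hi => hS ⟨huv, Or.inl hi⟩) (fun hj => hS ⟨huv, Or.inr hj⟩)
      exact ⟨f, hf.mono (sup_le_sup_right hTG _)⟩
  · calc G.edgeSet.ncard ≤ (blowupStripe H (Set.range ℓ)).edgeSet.ncard :=
          Set.ncard_le_ncard (edgeSet_mono hGS)
      _ = 2 * H.edgeSet.ncard ^ 2 * n - H.edgeSet.ncard ^ 3 := by
        rw [ncard_edgeSet_blowupStripe, Set.ncard_compl, Set.ncard_range_of_injective ℓ.injective,
          Nat.card_coe_set_eq, Nat.card_eq_fintype_card, Fintype.card_fin, mul_add_sub_mul_eq hn]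

/-- If `H` is `2`-connected with at least two edges, then for all `n ≥ e(H)` there is an
`(H,H[n])`-partite-saturated subgraph of `H[n]` with at most `2e(H)²n - e(H)³` edges. -/
theorem stmt_11 {V : Type*} [Fintype V] (H : SimpleGraph V) (h2c : TwoConnected H)
    (he : 2 ≤ H.edgeSet.ncard) (n : ℕ) (hn : H.edgeSet.ncard ≤ n) :
    ∃ G : SimpleGraph (V × Fin n), PartiteSaturated H G ∧
      G.edgeSet.ncard ≤ 2 * H.edgeSet.ncard ^ 2 * n - H.edgeSet.ncard ^ 3 :=
  stmt_11_general H h2c n hn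
end

section
/- If H is 2-connected, then every (H, H[n])-partite-saturated subgraph of H[n] has minimum degree at least 1, and hence at least |H|·n/2 edges; in particular satp(H, H[n]) = Ω(n). -/
open SimpleGraph

/-- In a 2-connected graph, every vertex has a neighbor avoiding any prescribed
other vertex. -/
lemma neighbor_ne {V : Type*} [Fintype V] {H : SimpleGraph V} (h2c : TwoConnected H)
    (v w : V) (hvw : v ≠ w) : ∃ u, H.Adj v u ∧ u ≠ w := by
  classical
  obtain ⟨hcard, hconn⟩ := h2c
  have hz : ∃ z : V, z ≠ v ∧ z ≠ w := by
    by_contra h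
    push_neg at h
    have hsub : (Finset.univ : Finset V) ⊆ {v, w} := by
      intro z _
      by_cases hz : z = v
      · simp [hz]
      · simp [h z hz]
    have := Finset.card_le_card hsub
    have h2 : ({v, w} : Finset V).card ≤ 2 := by
      apply le_trans (Finset.card_insert_le _ _)
      simp
    simp only [Finset.card_univ] at this
    omega
  obtain ⟨z, hzv, hzw⟩ := hz
  have hv : v ∈ {u : V | u ≠ w} := hvw
  have hzmem : z ∈ {u : V | u ≠ w} := hzw
  have hreach := ((hconn w).preconnected) ⟨v, hv⟩ ⟨z, hzmem⟩
  obtain ⟨p⟩ := hreach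
  cases p with
  | nil => exact absurd rfl hzv
  | @cons _ b _ hadj p' => exact ⟨b.val, hadj, b.prop⟩

/-- If `H` is `2`-connected, then every `(H,H[n])`-partite-saturated subgraph of `H[n]`
has minimum degree at least `1`, and hence at least `|H|·n/2` edges. -/
theorem stmt_12 {V : Type*} [Fintype V] (H : SimpleGraph V) (h2c : TwoConnected H)
    (n : ℕ) (G : SimpleGraph (V × Fin n)) (hG : PartiteSaturated H G) :
    (∀ x : V × Fin n, 1 ≤ deg G x) ∧
      Fintype.card V * n ≤ 2 * G.edgeSet.ncard := by
  classical
  have hdeg : ∀ x : V × Fin n, 1 ≤ deg G x := by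
    rintro ⟨v, i⟩
    by_contra hcon
    have hzero : deg G (v, i) = 0 := by omega
    have hempty : G.neighborSet (v, i) = ∅ := by
      have := (Set.ncard_eq_zero (Set.toFinite _)).mp hzero
      exact this
    have hiso : ∀ y, ¬ G.Adj (v, i) y := by
      intro y hy
      have : y ∈ G.neighborSet (v, i) := hy
      rw [hempty] at this
      exact this
    -- find a vertex different from v
    have hcard := h2c.1
    have h2 : (1 : ℕ) < Fintype.card V := by omega
    obtain ⟨w₀, hw₀⟩ := Fintype.exists_ne_of_one_lt_card h2 v
    obtain ⟨u₁, hu₁adj, _⟩ := neighbor_ne h2c v w₀ (Ne.symm hw₀)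
    obtain ⟨u₂, hu₂adj, hu₂ne⟩ := neighbor_ne h2c v u₁ (H.ne_of_adj hu₁adj)
    have hbadj : (blowup H n).Adj (v, i) (u₁, i) := hu₁adj
    have hnadj : ¬ G.Adj (v, i) (u₁, i) := hiso _
    obtain ⟨f, hf⟩ := hG.2.2 hbadj hnadj
    by_cases hnew : ∀ ⦃a b : V⦄, H.Adj a b → G.Adj (a, f a) (b, f b)
    · exact hG.2.1 ⟨f, hnew⟩
    · push_neg at hnew
      obtain ⟨a, b, hab, hnG⟩ := hnew
      have h1 := hf hab
      rcases h1 with h1 | h1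
      · exact hnG h1
      · obtain ⟨hmem, hne⟩ := h1
        rw [Sym2.toRel_prop, Set.mem_singleton_iff] at hmem
        rw [Sym2.eq_iff] at hmem
        have hfv : f v = i := by
          rcases hmem with ⟨h₁, h₂⟩ | ⟨h₁, h₂⟩
          · injection h₁ with ha hfa; subst ha; exact hfa
          · injection h₂ with ha hfa; subst ha; exact hfa
        have h2' := hf hu₂adj
        rw [hfv] at h2'
        rcases h2' with h2' | h2'
        · exact hiso _ h2'
        · obtain ⟨hmem2, _⟩ := h2'
          rw [Sym2.toRel_prop, Set.mem_singleton_iff] at hmem2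
          rw [Sym2.eq_iff] at hmem2
          rcases hmem2 with ⟨h₁, h₂⟩ | ⟨h₁, h₂⟩
          · injection h₂ with hb _
            exact hu₂ne hb
          · injection h₁ with hb _
            exact H.ne_of_adj hu₁adj hb
  refine ⟨hdeg, ?_⟩
  have hdc : ∀ x, deg G x = G.degree x := by
    intro x
    rw [deg, Set.ncard_eq_toFinset_card', SimpleGraph.degree, SimpleGraph.neighborFinset]
  have hedge : G.edgeSet.ncard = G.edgeFinset.card := by
    rw [Set.ncard_eq_toFinset_card', SimpleGraph.edgeFinset]
  have hsum : ∑ x : V × Fin n, G.degree x = 2 * G.edgeFinset.card :=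
    SimpleGraph.sum_degrees_eq_twice_card_edges G
  have hle : Fintype.card (V × Fin n) ≤ ∑ x : V × Fin n, G.degree x := by
    calc Fintype.card (V × Fin n) = ∑ _x : V × Fin n, 1 := by simp
      _ ≤ ∑ x : V × Fin n, G.degree x :=
        Finset.sum_le_sum (fun x _ => by rw [← hdc x]; exact hdeg x)
  rw [hedge]
  calc Fintype.card V * n = Fintype.card (V × Fin n) := by
        simp [Fintype.card_prod]
    _ ≤ ∑ x : V × Fin n, G.degree x := hle
    _ = 2 * G.edgeFinset.card := hsum
end

section
/- If H is a disconnected graph with no isolated vertices and at least two connected components each containing an edge, then every (H, H[n])-partite-saturated subgraph of H[n] contains a complete blow-up H_i[n] of at least one component H_i, and hence has at least n² edges. -/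
open SimpleGraph

/-- If `H` is disconnected, has no isolated vertices, and has two distinct connected
components each containing an edge, then every `(H,H[n])`-partite-saturated subgraph of
`H[n]` contains the complete blow-up of at least one component, and hence has at least
`n²` edges. -/
theorem stmt_13 {V : Type*} [Fintype V] (H : SimpleGraph V)
    (hdisc : ¬ H.Connected) (hiso : ∀ v : V, ∃ u, H.Adj v u)
    (hcomp : ∃ C₁ C₂ : H.ConnectedComponent, C₁ ≠ C₂ ∧
      (∃ x y, H.Adj x y ∧ x ∈ C₁.supp) ∧ (∃ x y, H.Adj x y ∧ x ∈ C₂.supp))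
    (n : ℕ) (G : SimpleGraph (V × Fin n)) (hG : PartiteSaturated H G) :
    (∃ C : H.ConnectedComponent, ∀ x y : V × Fin n,
        x.1 ∈ C.supp → y.1 ∈ C.supp → H.Adj x.1 y.1 → G.Adj x y) ∧
      n ^ 2 ≤ G.edgeSet.ncard := by
  classical
  obtain ⟨hle, hno, hsat⟩ := hG
  obtain ⟨C₁, C₂, hC12, -, -⟩ := hcomp
  -- helper: a partite copy in G + (edge inside C-blowup) uses only G-edges outside C
  have aux : ∀ (x y : V × Fin n) (C : H.ConnectedComponent), x.1 ∈ C.supp → y.1 ∈ C.supp →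
      ∀ f, IsPartiteCopy H (G ⊔ SimpleGraph.fromEdgeSet {s(x, y)}) f →
      ∀ u v : V, H.Adj u v → H.connectedComponentMk u ≠ C → G.Adj (u, f u) (v, f v) := by
    intro x y C hx hy f hf u v huv hne
    have h := hf huv
    rcases h with h | h
    · exact h
    · rw [SimpleGraph.fromEdgeSet_adj] at h
      have h' := h.1
      simp only [Set.mem_singleton_iff, Sym2.eq_iff] at h'
      exfalso
      rcases h' with ⟨h1, -⟩ | ⟨h1, -⟩
      · apply hne
        rw [← ConnectedComponent.mem_supp_iff]
        have : (u : V) = x.1 := congrArg Prod.fst h1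
        rw [this]; exact hx
      · apply hne
        rw [← ConnectedComponent.mem_supp_iff]
        have : (u : V) = y.1 := congrArg Prod.fst h1
        rw [this]; exact hy
  have key : ∃ C : H.ConnectedComponent, ∀ x y : V × Fin n,
      x.1 ∈ C.supp → y.1 ∈ C.supp → H.Adj x.1 y.1 → G.Adj x y := by
    by_contra hc
    push_neg at hc
    obtain ⟨x₁, y₁, hx₁, hy₁, ha₁, hg₁⟩ := hc C₁
    obtain ⟨x₂, y₂, hx₂, hy₂, ha₂, hg₂⟩ := hc C₂
    obtain ⟨f₁, hf₁⟩ := hsat (show (blowup H n).Adj x₁ y₁ from ha₁) hg₁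
    obtain ⟨f₂, hf₂⟩ := hsat (show (blowup H n).Adj x₂ y₂ from ha₂) hg₂
    apply hno
    refine ⟨fun v => if H.connectedComponentMk v = C₁ then f₂ v else f₁ v, ?_⟩
    intro u v huv
    have hcc : H.connectedComponentMk u = H.connectedComponentMk v :=
      ConnectedComponent.sound huv.reachable
    by_cases h : H.connectedComponentMk u = C₁
    · have h' : H.connectedComponentMk v = C₁ := hcc ▸ h
      simp only [h, h', if_true]
      exact aux x₂ y₂ C₂ hx₂ hy₂ f₂ hf₂ u v huv (by rw [h]; exact hC12)
    · have h' : ¬ H.connectedComponentMk v = C₁ := fun hh => h (hcc ▸ hh)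
      simp only [h, h', if_false]
      exact aux x₁ y₁ C₁ hx₁ hy₁ f₁ hf₁ u v huv h
  refine ⟨key, ?_⟩
  obtain ⟨C, hC⟩ := key
  obtain ⟨v, hv⟩ := C.exists_rep
  obtain ⟨u, hadj⟩ := hiso v
  have hvC : v ∈ C.supp := hv
  have huC : u ∈ C.supp := by
    rw [ConnectedComponent.mem_supp_iff, show C = H.connectedComponentMk v from hv.symm]
    exact ConnectedComponent.sound hadj.symm.reachable
  have hvu : v ≠ u := hadj.ne
  set F : Fin n × Fin n → Sym2 (V × Fin n) := fun p => s(((v, p.1) : V × Fin n), (u, p.2))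
  have hinj : Function.Injective F := by
    intro p q hpq
    simp only [F, Sym2.eq_iff, Prod.mk.injEq] at hpq
    rcases hpq with ⟨⟨-, h1⟩, ⟨-, h2⟩⟩ | ⟨⟨h1, -⟩, -⟩
    · exact Prod.ext h1 h2
    · exact absurd h1 hvu
  have hsub : Set.range F ⊆ G.edgeSet := by
    rintro - ⟨p, rfl⟩
    exact hC (v, p.1) (u, p.2) hvC huC hadj
  calc n ^ 2 = (Set.range F).ncard := by
        rw [← Set.image_univ, Set.ncard_image_of_injective _ hinj, Set.ncard_univ, Nat.card_eq_fintype_card]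
        simp [sq]
    _ ≤ G.edgeSet.ncard := Set.ncard_le_ncard hsub G.edgeSet.toFinite
end

section
/- Let r ≥ 4 and let G be a (K_r, K_r[n])-partite-extra-saturated graph with n ≥ 3. Then every vertex of G has degree at least r−1. -/
/-!
If `deg v ≤ r - 2`, then some part `X_j` (with `v ∉ X_j`) contains no neighbour of `v`, and
since the parts other than the part of `v` and `X_j` have `(r - 2) n > r - 2` vertices, `v` has a
non-neighbour `y` outside `X_j`. A partite copy of `K_r` through the new edge `vy` would contain
`v` and hence a neighbour of `v` in `X_j`, so adding `vy` creates no new copy: `G` is not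
extra-saturated.
-/

open SimpleGraph

/-- `G ⊆ H[n]` is `(H,H[n])`-partite-extra-saturated: adding any edge of `H[n]` not in
`G` strictly increases the number of partite copies of `H`. -/
def ExtraSaturated {V : Type*} {n : ℕ} (H : SimpleGraph V)
    (G : SimpleGraph (V × Fin n)) : Prop :=
  G ≤ blowup H n ∧
    ∀ ⦃x y : V × Fin n⦄, (blowup H n).Adj x y → ¬ G.Adj x y →
      Nat.card {f : V → Fin n // IsPartiteCopy H G f} <
        Nat.card {f : V → Fin n //
          IsPartiteCopy H (G ⊔ SimpleGraph.fromEdgeSet {s(x, y)}) f}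

theorem isPartiteCopy_sup_edge_iff {V : Type*} {n : ℕ} {H : SimpleGraph V}
    {G : SimpleGraph (V × Fin n)} {v y : V × Fin n} {j : V} (hvj : H.Adj v.1 j)
    (hj : ∀ b, ¬ G.Adj v (j, b)) (hyj : y.1 ≠ j) (f : V → Fin n) :
    IsPartiteCopy H (G ⊔ fromEdgeSet {s(v, y)}) f ↔ IsPartiteCopy H G f := by
  refine ⟨fun hf => ?_, fun hf u w huw => Or.inl (hf huw)⟩
  have hfv : (v.1, f v.1) ≠ v := by
    intro hv
    have hadj := hf hvj
    rw [hv] at hadj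
    rcases hadj with hG | ⟨he, -⟩
    · exact hj _ hG
    · rw [Sym2.toRel_prop, Set.mem_singleton_iff, Sym2.eq_iff] at he
      rcases he with ⟨-, hy⟩ | ⟨-, hv'⟩
      · exact hyj (congrArg Prod.fst hy).symm
      · exact hvj.ne (congrArg Prod.fst hv').symm
  intro u w huw
  rcases hf huw with hG | ⟨he, -⟩
  · exact hG
  · rw [Sym2.toRel_prop, Set.mem_singleton_iff, Sym2.eq_iff] at he
    rcases he with ⟨hu, -⟩ | ⟨-, hw⟩
    · obtain rfl : u = v.1 := congrArg Prod.fst hu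
      exact absurd hu hfv
    · obtain rfl : w = v.1 := congrArg Prod.fst hw
      exact absurd hw hfv

theorem exists_part_not_adj_of_deg_lt {V : Type*} [Finite V] {n : ℕ}
    (G : SimpleGraph (V × Fin n)) (v : V × Fin n) (h : deg G v < Nat.card V - 1) :
    ∃ j ≠ v.1, ∀ b, ¬ G.Adj v (j, b) := by
  have : Nonempty (Fin n) := ⟨v.2⟩
  by_contra! hc
  choose! b hb using hc
  have hle : ({v.1}ᶜ : Set V).ncard ≤ deg G v :=
    Set.ncard_le_ncard_of_injOn (fun j => (j, b j)) hb fun _ _ _ _ h => congrArg Prod.fst h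
  rw [Set.ncard_compl, Set.ncard_singleton] at hle
  omega

theorem exists_not_adj_outside_parts_of_deg_lt {V : Type*} [Finite V] {n : ℕ}
    (G : SimpleGraph (V × Fin n)) (v : V × Fin n) {i j : V} (hij : i ≠ j)
    (h : deg G v < (Nat.card V - 2) * n) :
    ∃ y : V × Fin n, y.1 ≠ i ∧ y.1 ≠ j ∧ ¬ G.Adj v y := by
  by_contra! hc
  have hsub : ({i, j}ᶜ ×ˢ Set.univ : Set (V × Fin n)) ⊆ G.neighborSet v := by
    rintro y ⟨hy, -⟩
    simp only [Set.mem_compl_iff, Set.mem_insert_iff, Set.mem_singleton_iff, not_or] at hy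
    exact hc y hy.1 hy.2
  have hle := Set.ncard_le_ncard hsub
  rw [Set.ncard_prod, Set.ncard_compl, Set.ncard_pair hij, Set.ncard_univ, Nat.card_fin] at hle
  exact absurd hle (not_le.2 h)

/-- For `r ≥ 4` and `n ≥ 3`, every vertex of a `(K_r,K_r[n])`-partite-extra-saturated
graph has degree at least `r - 1`. -/
theorem stmt_16 (r n : ℕ) (hr : 4 ≤ r) (hn : 3 ≤ n)
    (G : SimpleGraph (Fin r × Fin n))
    (hG : ExtraSaturated (⊤ : SimpleGraph (Fin r)) G) :
    ∀ v : Fin r × Fin n, r - 1 ≤ deg G v := by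
  intro v
  by_contra! hdeg
  obtain ⟨j, hjv, hj⟩ := exists_part_not_adj_of_deg_lt G v (by rwa [Nat.card_fin])
  have hdeg' : deg G v < (Nat.card (Fin r) - 2) * n := by
    have := Nat.mul_le_mul_left (r - 2) hn
    rw [Nat.card_fin]
    omega
  obtain ⟨y, hyv, hyj, hvy⟩ := exists_not_adj_outside_parts_of_deg_lt G v hjv.symm hdeg'
  have hadj : (blowup ⊤ n).Adj v y := (top_adj _ _).2 (Ne.symm hyv)
  refine (hG.2 hadj hvy).ne (Nat.card_congr (Equiv.subtypeEquivRight fun f => ?_))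
  exact (isPartiteCopy_sup_edge_iff ((top_adj _ _).2 hjv.symm) hj hyj f).symm
end

section
/- For any tree T on at least 3 vertices and any n ≥ 4, the minimum number of edges in a (T, T[n])-partite-extra-saturated graph equals (|T|−1)·n. -/
open SimpleGraph

/-!
Write `crossCount G a b` for the number of `G`-edges between the parts of adjacent vertices `a`,
`b` of `T`. If `(a, i)(x, k)` is a non-edge of an extra-saturated `G`, a new partite copy passes
through it, so `(a, i)` has a `G`-neighbour in the part of every other neighbour `b` of `a`.
Counting row by row, `3n ≤ crossCount G a x + 2 crossCount G a b` for distinct neighbours `b`, `x`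
of `a` (when `n ≥ 3`). Hence every vertex lies on at most one deficient pair (`crossCount < n`),
and every other pair at that vertex carries a surplus of twice the deficit. Adjacent vertices of a
tree on at least three vertices are not both leaves, so the surpluses pay for all deficits and
`G` has at least `(|T| - 1) n` edges. The bound is attained by `n` disjoint copies of `T`, i.e.
`T □ ⊥`: a non-edge `(u, i)(w, j)` lies in the new copy that is `i` on `u`'s side of the bridge
`uw` and `j` on `w`'s side.
-/

open Finset

namespace SimpleGraph

variable {V : Type*}

section Finite

variable [Fintype V] {T : SimpleGraph V} [DecidableRel T.Adj]

lemma sum_sum_neighborFinset_comm {M : Type*} [AddCommMonoid M] (f : V → V → M) :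
    ∑ a, ∑ b ∈ T.neighborFinset a, f a b = ∑ a, ∑ b ∈ T.neighborFinset a, f b a := by
  simp only [neighborFinset_eq_filter, sum_filter]
  rw [sum_comm]
  simp only [T.adj_comm]

lemma Connected.three_le_degree_add_degree (hT : T.Connected) (hV : 3 ≤ Fintype.card V) {a b : V}
    (hab : T.Adj a b) : 3 ≤ T.degree a + T.degree b := by
  classical
  by_contra! hlt
  have ha := (T.degree_pos_iff_exists_adj a).2 ⟨b, hab⟩
  have hb := (T.degree_pos_iff_exists_adj b).2 ⟨a, hab.symm⟩
  have hleaf : ∀ ⦃u v⦄, T.degree u = 1 → T.Adj u v → ∀ w, T.Adj u w → w = v :=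
    fun u v hu huv ↦ by
      obtain ⟨v', -, hv'⟩ := degree_eq_one_iff_existsUnique_adj.1 hu
      exact fun w hw ↦ (hv' w hw).trans (hv' v huv).symm
  have hcard : #({a, b} : Finset V) < #(univ : Finset V) := by
    rw [card_univ]; exact card_le_two.trans_lt hV
  obtain ⟨c, -, hc⟩ := exists_mem_notMem_of_card_lt_card hcard
  obtain ⟨d, -, hd, hd'⟩ :=
    (hT.preconnected a c).some.exists_boundary_dart (↑({a, b} : Finset V)) (by simp) hc
  simp only [mem_coe, mem_insert, mem_singleton] at hd hd'
  rcases hd with h | h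
  · exact hd' (.inr (hleaf (u := a) (by omega) hab _ (h ▸ d.adj)))
  · exact hd' (.inl (hleaf (u := b) (by omega) hab.symm _ (h ▸ d.adj)))

lemma Connected.three_mul_sum_le_two_mul_sum_degree_mul (hT : T.Connected)
    (hV : 3 ≤ Fintype.card V) (δ : V → V → ℕ) (hδ : ∀ a b, δ a b = δ b a) :
    3 * ∑ a, ∑ b ∈ T.neighborFinset a, δ a b ≤
      2 * ∑ a, T.degree a * ∑ b ∈ T.neighborFinset a, δ a b := by
  calc 3 * ∑ a, ∑ b ∈ T.neighborFinset a, δ a b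
      = ∑ a, ∑ b ∈ T.neighborFinset a, 3 * δ a b := by simp only [mul_sum]
    _ ≤ ∑ a, ∑ b ∈ T.neighborFinset a, (T.degree a + T.degree b) * δ a b :=
        sum_le_sum fun a _ ↦ sum_le_sum fun b hb ↦ Nat.mul_le_mul_right _ <|
          hT.three_le_degree_add_degree hV ((T.mem_neighborFinset a b).1 hb)
    _ = 2 * ∑ a, T.degree a * ∑ b ∈ T.neighborFinset a, δ a b := by
        simp only [add_mul, sum_add_distrib]
        rw [T.sum_sum_neighborFinset_comm fun a b ↦ T.degree b * δ a b]
        simp only [hδ, mul_sum, two_mul, sum_add_distrib]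

end Finite

lemma IsAcyclic.exists_eq_of_adj_of_ne_edge {α : Type*} {T : SimpleGraph V}
    (hT : T.IsAcyclic) {u w : V} (huw : T.Adj u w) (p q : α) :
    ∃ f : V → α, f u = p ∧ f w = q ∧ ∀ ⦃a b⦄, T.Adj a b → s(a, b) ≠ s(u, w) → f a = f b := by
  classical
  let T' := T.deleteEdges {s(u, w)}
  have hbridge : ¬ T'.Reachable u w := isAcyclic_iff_forall_adj_isBridge.1 hT huw
  refine ⟨fun a ↦ if T'.Reachable a u then p else q, if_pos .rfl,
    if_neg fun h ↦ hbridge h.symm, fun a b hab he ↦ ?_⟩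
  have hab' : T'.Adj a b := (deleteEdges_adj ..).2 ⟨hab, he⟩
  have : T'.Reachable a u ↔ T'.Reachable b u := ⟨hab'.symm.reachable.trans, hab'.reachable.trans⟩
  simp only [this]

end SimpleGraph

section Counting

variable {V : Type*} {n : ℕ} (G : SimpleGraph (V × Fin n)) [DecidableRel G.Adj]

def partDegree (v : V × Fin n) (b : V) : ℕ := #{j | G.Adj v (b, j)}

def crossCount (a b : V) : ℕ := ∑ i, partDegree G (a, i) b

variable {G}

lemma partDegree_eq_of_forall_adj {v : V × Fin n} {b : V} (h : ∀ j, G.Adj v (b, j)) :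
    partDegree G v b = n := by
  simp [partDegree, h]

lemma partDegree_pos_iff {v : V × Fin n} {b : V} :
    0 < partDegree G v b ↔ ∃ j, G.Adj v (b, j) := by
  simp [partDegree, card_pos, filter_nonempty_iff]

variable (G)

lemma crossCount_comm (a b : V) : crossCount G a b = crossCount G b a := by
  simp only [crossCount, partDegree, card_filter]
  rw [sum_comm]
  simp only [G.adj_comm]

lemma sum_partDegree [Fintype V] (v : V × Fin n) : ∑ b, partDegree G v b = G.degree v := by
  simp only [partDegree, ← card_neighborFinset_eq_degree, neighborFinset_eq_filter, card_filter,
    Fintype.sum_prod_type]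

lemma sum_sum_crossCount [Fintype V] {T : SimpleGraph V} [DecidableRel T.Adj]
    (hG : G ≤ blowup T n) :
    ∑ a, ∑ b ∈ T.neighborFinset a, crossCount G a b = 2 * #G.edgeFinset := by
  have hzero : ∀ a b, ¬ T.Adj a b → crossCount G a b = 0 := fun a b hab ↦
    sum_eq_zero fun i _ ↦ card_eq_zero.2 <| filter_eq_empty_iff.2 fun j _ h ↦ hab (hG h)
  calc ∑ a, ∑ b ∈ T.neighborFinset a, crossCount G a b
      = ∑ a, ∑ b, crossCount G a b := sum_congr rfl fun a _ ↦
        sum_subset (subset_univ _) fun b _ hb ↦ hzero a b (by simpa using hb)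
    _ = ∑ v, G.degree v := by
        simp only [crossCount, ← sum_partDegree, Fintype.sum_prod_type]
        exact sum_congr rfl fun a _ ↦ sum_comm
    _ = 2 * #G.edgeFinset := G.sum_degrees_eq_twice_card_edges

end Counting

lemma card_partiteCopies_lt_iff {V : Type*} [Finite V] {n : ℕ} {H : SimpleGraph V}
    {G G' : SimpleGraph (V × Fin n)} :
    Nat.card {f // IsPartiteCopy H G f} < Nat.card {f // IsPartiteCopy H (G ⊔ G') f} ↔
      ∃ f, IsPartiteCopy H (G ⊔ G') f ∧ ¬ IsPartiteCopy H G f := by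
  have hsub : {f | IsPartiteCopy H G f} ⊆ {f | IsPartiteCopy H (G ⊔ G') f} :=
    fun f hf _ _ h ↦ Or.inl (hf h)
  change Set.ncard _ < Set.ncard _ ↔ _
  refine ⟨fun hlt ↦ ?_, fun ⟨f, hf, hnf⟩ ↦
    Set.ncard_lt_ncard ((Set.ssubset_iff_of_subset hsub).2 ⟨f, hf, hnf⟩)⟩
  by_contra! h
  exact hlt.ne (congrArg Set.ncard (hsub.antisymm h))

theorem ExtraSaturated.exists_adj_of_not_adj {V : Type*} [Finite V] {n : ℕ} {T : SimpleGraph V}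
    {G : SimpleGraph (V × Fin n)} (hG : ExtraSaturated T G) {a b x : V} (hab : T.Adj a b)
    (hax : T.Adj a x) (hbx : b ≠ x) {i k : Fin n} (h : ¬ G.Adj (a, i) (x, k)) :
    ∃ j, G.Adj (a, i) (b, j) := by
  obtain ⟨f, hf, hnf⟩ := card_partiteCopies_lt_iff.1 (hG.2 (x := (a, i)) (y := (x, k)) hax h)
  have hnew : ∀ ⦃c d⦄, T.Adj c d →
      G.Adj (c, f c) (d, f d) ∨ s((c, f c), (d, f d)) = s((a, i), (x, k)) :=
    fun c d hcd ↦ (hf hcd).imp_right fun h ↦ h.1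
  -- `f` is no copy in `G`, so it uses the added edge
  have hfa : f a = i := by
    obtain ⟨c, d, hcd, hnG⟩ : ∃ c d, T.Adj c d ∧ ¬ G.Adj (c, f c) (d, f d) := by
      simpa [IsPartiteCopy] using hnf
    rcases Sym2.eq_iff.1 ((hnew hcd).resolve_left hnG) with ⟨h, -⟩ | ⟨-, h⟩ <;>
      obtain ⟨rfl, h⟩ := Prod.ext_iff.1 h <;> exact h
  refine ⟨f b, ?_⟩
  rcases hnew hab with h | h
  · rwa [hfa] at h
  · have := congrArg (Sym2.map Prod.fst) h
    simp only [Sym2.map_mk, Sym2.congr_right] at this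
    exact absurd this hbx

section ExtraSaturated

variable {V : Type*} [Fintype V] {n : ℕ} {T : SimpleGraph V} {G : SimpleGraph (V × Fin n)}
  [DecidableRel G.Adj] {a b x : V}

lemma three_le_partDegree_add_two_mul (hG : ExtraSaturated T G) (hn : 3 ≤ n) (hab : T.Adj a b)
    (hax : T.Adj a x) (hbx : b ≠ x) (i : Fin n) :
    3 ≤ partDegree G (a, i) x + 2 * partDegree G (a, i) b := by
  by_cases hx : ∀ k, G.Adj (a, i) (x, k)
  · rw [partDegree_eq_of_forall_adj hx]; omega
  by_cases hb : ∀ j, G.Adj (a, i) (b, j)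
  · rw [partDegree_eq_of_forall_adj hb]; omega
  push Not at hx hb
  obtain ⟨k, hk⟩ := hx
  obtain ⟨j, hj⟩ := hb
  have hb_pos := partDegree_pos_iff.2 (hG.exists_adj_of_not_adj hab hax hbx hk)
  have hx_pos := partDegree_pos_iff.2 (hG.exists_adj_of_not_adj hax hab hbx.symm hj)
  omega

lemma three_mul_le_crossCount_add_two_mul (hG : ExtraSaturated T G) (hn : 3 ≤ n)
    (hab : T.Adj a b) (hax : T.Adj a x) (hbx : b ≠ x) :
    3 * n ≤ crossCount G a x + 2 * crossCount G a b := by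
  calc 3 * n = ∑ _i : Fin n, 3 := by simp [mul_comm]
    _ ≤ ∑ i, (partDegree G (a, i) x + 2 * partDegree G (a, i) b) :=
        sum_le_sum fun i _ ↦ three_le_partDegree_add_two_mul hG hn hab hax hbx i
    _ = crossCount G a x + 2 * crossCount G a b := by
        rw [sum_add_distrib, ← mul_sum]; rfl

-- `n - crossCount G a b` is the deficit of the pair, truncated to `0` when the pair is full.
lemma add_two_mul_sum_deficit_le [DecidableRel T.Adj] (hG : ExtraSaturated T G) (hn : 3 ≤ n)
    (hax : T.Adj a x) :
    n + 2 * ∑ b ∈ T.neighborFinset a, (n - crossCount G a b) ≤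
      crossCount G a x + 3 * (n - crossCount G a x) := by
  by_cases hfull : ∀ b ∈ T.neighborFinset a, n ≤ crossCount G a b
  · rw [sum_eq_zero fun b hb ↦ Nat.sub_eq_zero_of_le (hfull b hb)]
    omega
  push Not at hfull
  obtain ⟨b, hb, hlt⟩ := hfull
  rw [mem_neighborFinset] at hb
  have hother : ∀ y, T.Adj a y → y ≠ b → n + 2 * (n - crossCount G a b) ≤ crossCount G a y :=
    fun y hy hyb ↦ by
      have := three_mul_le_crossCount_add_two_mul hG hn hb hy (Ne.symm hyb)
      omega
  rw [sum_eq_single b (fun y hy hyb ↦ by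
      have := hother y (mem_neighborFinset _ _ _ |>.1 hy) hyb; omega)
    (fun h ↦ absurd (mem_neighborFinset _ _ _ |>.2 hb) h)]
  by_cases hxb : x = b
  · subst hxb; omega
  · have := hother x hax hxb; omega

end ExtraSaturated

theorem ExtraSaturated.card_sub_one_mul_le_ncard_edgeSet {V : Type*} [Fintype V] {n : ℕ}
    {T : SimpleGraph V} {G : SimpleGraph (V × Fin n)} (hT : T.IsTree) (hV : 3 ≤ Fintype.card V)
    (hn : 3 ≤ n) (hG : ExtraSaturated T G) : (Fintype.card V - 1) * n ≤ G.edgeSet.ncard := by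
  classical
  rw [Set.ncard_eq_toFinset_card']
  change _ ≤ #G.edgeFinset
  have hdart := sum_le_sum fun a (_ : a ∈ univ) ↦ sum_le_sum fun x hx ↦
    add_two_mul_sum_deficit_le hG hn ((T.mem_neighborFinset a x).1 hx)
  simp only [sum_add_distrib, sum_const, card_neighborFinset_eq_degree, smul_eq_mul, ← sum_mul,
    mul_left_comm _ 2, ← mul_sum, sum_sum_crossCount G hG.1, T.sum_degrees_eq_twice_card_edges]
    at hdart
  have hsym := hT.connected.three_mul_sum_le_two_mul_sum_degree_mul hV
    (fun a b ↦ n - crossCount G a b) fun a b ↦ by rw [crossCount_comm]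
  rw [← hT.card_edgeFinset, Nat.add_sub_cancel]
  linarith

lemma SimpleGraph.IsAcyclic.extraSaturated_boxProd_bot {V : Type*} [Finite V] {n : ℕ}
    {T : SimpleGraph V} (hT : T.IsAcyclic) :
    ExtraSaturated T (T □ (⊥ : SimpleGraph (Fin n))) := by
  refine ⟨fun p q h ↦ (by simpa [boxProd_adj] using h : T.Adj p.1 q.1 ∧ _).1, ?_⟩
  rintro ⟨u, i⟩ ⟨w, j⟩ huw hnot
  simp only [blowup, comap_adj] at huw
  have hij : i ≠ j := fun h ↦ hnot (by simp [boxProd_adj, huw, h])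
  obtain ⟨f, hfu, hfw, hf⟩ := hT.exists_eq_of_adj_of_ne_edge huw i j
  refine card_partiteCopies_lt_iff.2 ⟨f, fun a b hab ↦ ?_, fun hc ↦ hij ?_⟩
  · by_cases he : s(a, b) = s(u, w)
    · right
      rcases Sym2.eq_iff.1 he with ⟨rfl, rfl⟩ | ⟨rfl, rfl⟩ <;>
        simp [hfu, hfw, hab.ne, Sym2.eq_swap]
    · left
      simp [boxProd_adj, hab, hf hab he]
  · exact (by simpa [boxProd_adj, hfu, hfw] using hc huw : T.Adj u w ∧ i = j).2

lemma SimpleGraph.IsTree.ncard_edgeSet_boxProd_bot {V : Type*} [Fintype V] {n : ℕ}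
    {T : SimpleGraph V} (hT : T.IsTree) :
    (T □ (⊥ : SimpleGraph (Fin n))).edgeSet.ncard = (Fintype.card V - 1) * n := by
  classical
  have h := (T □ (⊥ : SimpleGraph (Fin n))).sum_degrees_eq_twice_card_edges
  simp only [degree_boxProd, bot_degree, add_zero, Fintype.sum_prod_type] at h
  -- the `Fintype` instance inside `T.degree` still mentions `(x, y).1`, so `sum_const` is blind
  change ∑ x, ∑ _y : Fin n, T.degree x = _ at h
  simp only [sum_const, card_univ, Fintype.card_fin, smul_eq_mul, ← mul_sum,
    T.sum_degrees_eq_twice_card_edges] at h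
  rw [Set.ncard_eq_toFinset_card', ← hT.card_edgeFinset, Nat.add_sub_cancel]
  change #(T □ (⊥ : SimpleGraph (Fin n))).edgeFinset = _
  linarith

/-- For any tree `T` on at least `3` vertices and any `n ≥ 4`, the minimum number of
edges of a `(T,T[n])`-partite-extra-saturated graph is `(|T| - 1)·n`. -/
theorem stmt_17 {V : Type*} [Fintype V] (T : SimpleGraph V) (hT : T.IsTree)
    (hV : 3 ≤ Fintype.card V) (n : ℕ) (hn : 4 ≤ n) :
    IsLeast {m : ℕ | ∃ G : SimpleGraph (V × Fin n),
        ExtraSaturated T G ∧ G.edgeSet.ncard = m}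
      ((Fintype.card V - 1) * n) := by
  refine ⟨⟨T □ ⊥, hT.isAcyclic.extraSaturated_boxProd_bot, hT.ncard_edgeSet_boxProd_bot⟩, ?_⟩
  rintro m ⟨G, hG, rfl⟩
  exact hG.card_sub_one_mul_le_ncard_edgeSet hT hV (by omega)
end

section
/- Let r ≥ 4 and n ≥ m(r−1, r−1), where m(s,s) denotes the fewest vertices in an s-partite graph that is K_s-free but in which every set of s−1 parts contains a K_{s−1}. Then every (K_r, K_r[n])-saturated graph G satisfies δ(G) ≥ m(r−1, r−1), and hence sat(K_r, K_r[n]) ≥ m(r−1, r−1)·r·n/2. -/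
open SimpleGraph

/-- `mPartite s` is the fewest vertices of an `s`-partite graph which is `K_s`-free but
in which every choice of `s - 1` parts contains a `K_{s-1}`. -/
noncomputable def mPartite (s : ℕ) : ℕ :=
  sInf {m : ℕ | ∃ (G : SimpleGraph (Fin m)) (p : Fin m → Fin s),
    (∀ x y, G.Adj x y → p x ≠ p y) ∧ G.CliqueFree s ∧
    ∀ t : Finset (Fin s), t.card = s - 1 →
      ∃ st : Finset (Fin m), G.IsNClique (s - 1) st ∧ ∀ x ∈ st, p x ∈ t}

open Finset in
/-- Map `Fin r` minus a point `a` injectively to `Fin (r-1)`. -/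
def toIdx {r : ℕ} (hr : 2 ≤ r) (a c : Fin r) : Fin (r - 1) :=
  if h : (c : ℕ) < a then ⟨c, by have := a.isLt; omega⟩
  else ⟨(c : ℕ) - 1, by have := c.isLt; omega⟩

lemma toIdx_inj {r : ℕ} (hr : 2 ≤ r) (a : Fin r) {c d : Fin r} (hc : c ≠ a) (hd : d ≠ a)
    (h : toIdx hr a c = toIdx hr a d) : c = d := by
  have hc' : (c : ℕ) ≠ a := fun h' => hc (Fin.ext h')
  have hd' : (d : ℕ) ≠ a := fun h' => hd (Fin.ext h')
  unfold toIdx at h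
  apply Fin.ext
  split_ifs at h <;> simp only [Fin.mk.injEq] at h <;> omega

lemma toIdx_surj {r : ℕ} (hr : 2 ≤ r) (a : Fin r) (β : Fin (r - 1)) :
    ∃ b : Fin r, b ≠ a ∧ toIdx hr a b = β := by
  have hβ := β.isLt
  by_cases h : (β : ℕ) < a
  · refine ⟨⟨β, by omega⟩, ?_, ?_⟩
    · intro he; apply absurd (congrArg Fin.val he); simp; omega
    · unfold toIdx; rw [dif_pos (by simpa using h)]
  · refine ⟨⟨(β : ℕ) + 1, by omega⟩, ?_, ?_⟩
    · intro he; apply absurd (congrArg Fin.val he); simp; omega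
    · unfold toIdx; rw [dif_neg (by simp; omega)]
      apply Fin.ext; simp

lemma key_lemma (r n : ℕ) (hr : 4 ≤ r) (G : SimpleGraph (Fin r × Fin n))
    (hle : G ≤ blowup ⊤ n) (hfree : G.CliqueFree r) (v : Fin r × Fin n)
    (H3 : ∀ b : Fin r, b ≠ v.1 → ∃ S : Finset (Fin r × Fin n),
      (↑S ⊆ G.neighborSet v) ∧ G.IsNClique (r - 2) S ∧ ∀ x ∈ S, x.1 ≠ v.1 ∧ x.1 ≠ b) :
    mPartite (r - 1) ≤ deg G v := by
  classical
  have hr2 : 2 ≤ r := by omega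
  set a := v.1 with ha
  have hfin : (G.neighborSet v).Finite := Set.toFinite _
  set F : Finset (Fin r × Fin n) := hfin.toFinset with hF
  have hdeg : deg G v = F.card := Set.ncard_eq_toFinset_card _ hfin
  rw [hdeg]
  apply Nat.sInf_le
  set e := F.equivFin with he
  set q : Fin F.card → Fin r × Fin n := fun i => ↑(e.symm i) with hq
  have hqN : ∀ i, q i ∈ G.neighborSet v := fun i => hfin.mem_toFinset.1 (e.symm i).2
  have hqadj : ∀ i, G.Adj v (q i) := fun i => hqN i
  have hqinj : Function.Injective q := fun i j h =>
    e.symm.injective (Subtype.ext h)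
  have hqsurj : ∀ x ∈ G.neighborSet v, ∃ i, q i = x := fun x hx =>
    ⟨e ⟨x, hfin.mem_toFinset.2 hx⟩, by simp [hq]⟩
  have hpart : ∀ i, (q i).1 ≠ a := by
    intro i h
    exact (hle (hqadj i)) h.symm
  set G₀ : SimpleGraph (Fin F.card) := SimpleGraph.comap q G with hG₀
  set p : Fin F.card → Fin (r - 1) := fun i => toIdx hr2 a (q i).1 with hp
  refine ⟨G₀, p, ?_, ?_, ?_⟩
  · -- adjacency respects parts
    intro x y hadj hpeq
    have hxy : (q x).1 ≠ (q y).1 := hle hadj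
    exact hxy (toIdx_inj hr2 a (hpart x) (hpart y) hpeq)
  · -- CliqueFree (r-1)
    intro S hS
    have hvnot : v ∉ S.image q := by
      simp only [Finset.mem_image, not_exists]
      rintro i ⟨hi, hqi⟩
      exact G.notMem_neighborSet_self (hqi ▸ hqN i)
    apply hfree (insert v (S.image q))
    constructor
    · intro x hx y hy hxy
      simp only [Finset.coe_insert, Set.mem_insert_iff, Finset.coe_image, Set.mem_image,
        Finset.mem_coe] at hx hy
      rcases hx with rfl | ⟨i, hi, rfl⟩
      · rcases hy with rfl | ⟨j, hj, rfl⟩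
        · exact absurd rfl hxy
        · exact hqadj j
      · rcases hy with rfl | ⟨j, hj, rfl⟩
        · exact (hqadj i).symm
        · have hij : i ≠ j := fun h => hxy (by rw [h])
          exact hS.1 hi hj hij
    · rw [Finset.card_insert_of_notMem hvnot, Finset.card_image_of_injective _ hqinj, hS.2]
      omega
  · -- every (r-1)-1 parts contain a clique
    intro t ht
    have hcompl : tᶜ.card = 1 := by
      have := Finset.card_compl t
      rw [ht] at this
      simp only [Fintype.card_fin] at this
      omega
    obtain ⟨β, hβ⟩ := Finset.card_eq_one.1 hcompl
    have hmem : ∀ x : Fin (r - 1), x ≠ β → x ∈ t := by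
      intro x hx
      by_contra h
      have : x ∈ tᶜ := Finset.mem_compl.2 h
      rw [hβ, Finset.mem_singleton] at this
      exact hx this
    obtain ⟨b, hba, hbβ⟩ := toIdx_surj hr2 a β
    obtain ⟨S, hSN, hScl, hSparts⟩ := H3 b hba
    set st : Finset (Fin F.card) := Finset.univ.filter (fun i => q i ∈ S) with hst
    have himg : st.image q = S := by
      ext x
      simp only [Finset.mem_image, hst, Finset.mem_filter, Finset.mem_univ, true_and]
      constructor
      · rintro ⟨i, hi, rfl⟩; exact hi
      · intro hx
        obtain ⟨i, rfl⟩ := hqsurj x (hSN hx)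
        exact ⟨i, hx, rfl⟩
    have hcard : st.card = r - 2 := by
      rw [← hScl.2, ← himg, Finset.card_image_of_injective _ hqinj]
    refine ⟨st, ⟨?_, by omega⟩, ?_⟩
    · intro i hi j hj hij
      simp only [hst, Finset.coe_filter, Set.mem_setOf_eq, Finset.mem_univ, true_and] at hi hj
      exact hScl.1 hi hj (fun h => hij (hqinj h))
    · intro i hi
      simp only [hst, Finset.mem_filter, Finset.mem_univ, true_and] at hi
      obtain ⟨h1, h2⟩ := hSparts _ hi
      apply hmem
      intro hpe
      exact h2 (toIdx_inj hr2 a h1 hba (hpe.trans hbβ.symm))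

lemma blowup_adj {r n : ℕ} (x y : Fin r × Fin n) :
    (blowup (⊤ : SimpleGraph (Fin r)) n).Adj x y ↔ x.1 ≠ y.1 := by
  simp [blowup, SimpleGraph.comap_adj]

lemma sat_H3 (r n : ℕ) (hr : 4 ≤ r) (G : SimpleGraph (Fin r × Fin n))
    (hG : CliqueSaturated r n G) (v : Fin r × Fin n)
    (hB : ∀ b : Fin r, ∃ j : Fin n, ¬ G.Adj v (b, j)) :
    ∀ b : Fin r, b ≠ v.1 → ∃ S : Finset (Fin r × Fin n),
      (↑S ⊆ G.neighborSet v) ∧ G.IsNClique (r - 2) S ∧ ∀ x ∈ S, x.1 ≠ v.1 ∧ x.1 ≠ b := by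
  obtain ⟨hle, hfree, hsat⟩ := hG
  intro b hba
  obtain ⟨j, hj⟩ := hB b
  set w : Fin r × Fin n := (b, j) with hw
  have hbvw : (blowup (⊤ : SimpleGraph (Fin r)) n).Adj v w := (blowup_adj v w).2 (fun h => hba h.symm)
  have hvw : v ≠ w := hbvw.ne
  have hnot := hsat hbvw hj
  unfold SimpleGraph.CliqueFree at hnot
  push_neg at hnot
  obtain ⟨K, hK⟩ := hnot
  -- G ⊔ the new edge is still within the blowup
  have hle' : (G ⊔ SimpleGraph.fromEdgeSet {s(v, w)}) ≤ blowup (⊤ : SimpleGraph (Fin r)) n := by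
    apply sup_le hle
    intro x y hxy
    rw [SimpleGraph.fromEdgeSet_adj] at hxy
    obtain ⟨hmem, -⟩ := hxy
    rw [Set.mem_singleton_iff, Sym2.eq_iff] at hmem
    rcases hmem with ⟨rfl, rfl⟩ | ⟨rfl, rfl⟩
    · exact hbvw
    · exact hbvw.symm
  -- a clique avoiding the new edge is a G-clique
  have hGadj : ∀ x ∈ K, ∀ y ∈ K, x ≠ y → s(x, y) ≠ s(v, w) → G.Adj x y := by
    intro x hx y hy hxy hne
    have := hK.1 hx hy hxy
    rcases this with h | h
    · exact h
    · rw [SimpleGraph.fromEdgeSet_adj, Set.mem_singleton_iff] at h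
      exact absurd h.1 hne
  have hvK : v ∈ K := by
    by_contra hv
    apply hfree K
    refine ⟨?_, hK.2⟩
    intro x hx y hy hxy
    apply hGadj x hx y hy hxy
    intro h
    rw [Sym2.eq_iff] at h
    rcases h with ⟨rfl, rfl⟩ | ⟨rfl, rfl⟩
    · exact hv hx
    · exact hv hy
  have hwK : w ∈ K := by
    by_contra hv
    apply hfree K
    refine ⟨?_, hK.2⟩
    intro x hx y hy hxy
    apply hGadj x hx y hy hxy
    intro h
    rw [Sym2.eq_iff] at h
    rcases h with ⟨rfl, rfl⟩ | ⟨rfl, rfl⟩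
    · exact hv hy
    · exact hv hx
  classical
  refine ⟨(K.erase v).erase w, ?_, ⟨?_, ?_⟩, ?_⟩
  · -- subset of neighborhood
    intro x hx
    rw [Finset.mem_coe, Finset.mem_erase, Finset.mem_erase] at hx
    obtain ⟨hxw, hxv, hxK⟩ := hx
    apply hGadj v hvK x hxK (fun h => hxv h.symm)
    intro h
    rw [Sym2.eq_iff] at h
    rcases h with ⟨-, rfl⟩ | ⟨rfl, -⟩
    · exact hxw rfl
    · exact hvw rfl
  · -- clique
    intro x hx y hy hxy
    rw [Finset.mem_coe, Finset.mem_erase, Finset.mem_erase] at hx hy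
    obtain ⟨hxw, hxv, hxK⟩ := hx
    obtain ⟨hyw, hyv, hyK⟩ := hy
    apply hGadj x hxK y hyK hxy
    intro h
    rw [Sym2.eq_iff] at h
    rcases h with ⟨rfl, rfl⟩ | ⟨rfl, rfl⟩
    · exact hxv rfl
    · exact hxw rfl
  · -- cardinality
    have h1 : w ∈ K.erase v := Finset.mem_erase.2 ⟨fun h => hvw h.symm, hwK⟩
    rw [Finset.card_erase_of_mem h1, Finset.card_erase_of_mem hvK, hK.2]
    omega
  · -- parts
    intro x hx
    simp only [Finset.mem_erase] at hx
    obtain ⟨hxw, hxv, hxK⟩ := hx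
    constructor
    · have : G.Adj v x := by
        apply hGadj v hvK x hxK (fun h => hxv h.symm)
        intro h
        rw [Sym2.eq_iff] at h
        rcases h with ⟨-, rfl⟩ | ⟨rfl, -⟩
        · exact hxw rfl
        · exact hvw rfl
      intro h
      exact (blowup_adj v x).1 (hle this) h.symm
    · have : (G ⊔ SimpleGraph.fromEdgeSet {s(v, w)}).Adj x w := hK.1 hxK hwK hxw
      have := (blowup_adj x w).1 (hle' this)
      exact this

lemma min_deg_s19 (r n : ℕ) (hr : 4 ≤ r) (hn : mPartite (r - 1) ≤ n)
    (G : SimpleGraph (Fin r × Fin n)) (hG : CliqueSaturated r n G)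
    (v : Fin r × Fin n) : mPartite (r - 1) ≤ deg G v := by
  by_cases hA : ∃ b : Fin r, ∀ j : Fin n, G.Adj v (b, j)
  · obtain ⟨b, hb⟩ := hA
    have hsub : Set.range (fun j : Fin n => ((b, j) : Fin r × Fin n)) ⊆ G.neighborSet v := by
      rintro _ ⟨j, rfl⟩; exact hb j
    have hinj : Function.Injective (fun j : Fin n => ((b, j) : Fin r × Fin n)) := by
      intro i j h; simpa using h
    have hcard : (Set.range (fun j : Fin n => ((b, j) : Fin r × Fin n))).ncard = n := by
      rw [← Set.image_univ, Set.ncard_image_of_injective _ hinj, Set.ncard_univ,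
        Nat.card_eq_fintype_card, Fintype.card_fin]
    calc mPartite (r - 1) ≤ n := hn
      _ = _ := hcard.symm
      _ ≤ deg G v := Set.ncard_le_ncard hsub (Set.toFinite _)
  · push_neg at hA
    exact key_lemma r n hr G hG.1 hG.2.1 v (sat_H3 r n hr G hG v hA)


/-- For `r ≥ 4` and `n ≥ m(r-1,r-1)`, every `(K_r,K_r[n])`-saturated graph `G` has
minimum degree at least `m(r-1,r-1)`, and hence at least `m(r-1,r-1)·r·n/2` edges. -/
theorem stmt_19 (r n : ℕ) (hr : 4 ≤ r) (hn : mPartite (r - 1) ≤ n)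
    (G : SimpleGraph (Fin r × Fin n)) (hG : CliqueSaturated r n G) :
    (∀ v : Fin r × Fin n, mPartite (r - 1) ≤ deg G v) ∧
      mPartite (r - 1) * r * n ≤ 2 * G.edgeSet.ncard := by
  classical
  have hmin := min_deg_s19 r n hr hn G hG
  refine ⟨hmin, ?_⟩
  letI : DecidableRel G.Adj := Classical.decRel _
  have hdeg : ∀ v, deg G v = G.degree v := by
    intro v
    rw [deg, ← SimpleGraph.card_neighborSet_eq_degree, Set.ncard_eq_toFinset_card',
      Set.toFinset_card]
  have hedge : G.edgeSet.ncard = G.edgeFinset.card := by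
    rw [Set.ncard_eq_toFinset_card', SimpleGraph.edgeFinset]
  rw [hedge, ← SimpleGraph.sum_degrees_eq_twice_card_edges]
  have hsum : (Finset.univ : Finset (Fin r × Fin n)).card • mPartite (r - 1)
      ≤ ∑ v, G.degree v := by
    apply Finset.card_nsmul_le_sum
    intro x _
    rw [← hdeg]
    exact hmin x
  have hcardu : (Finset.univ : Finset (Fin r × Fin n)).card = r * n := by
    simp [Fintype.card_fin]
  rw [hcardu, smul_eq_mul] at hsum
  calc mPartite (r - 1) * r * n = r * n * mPartite (r - 1) := by ring
    _ ≤ _ := hsum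
end
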